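/- arXiv:1805.03570 — 7 statements merged into one kernel-verified Lean document; each statement's English description precedes it below -/
import Mathlib

section
/- Assume 1 < Q < 2. Then Σ_{t∈ℤ³} a(t)² < ∞, and if moreover g(t) → g∞ as |t| → ∞ for some g∞ ∈ (0,∞), then Σ_{t∈ℤ³} |a(t)| = ∞. -/
open Filter


-- 1D summability
lemma aux_sum1d {r : ℝ} (hr : 1 < r) :
    Summable (fun n : ℤ => (max |(n:ℝ)| 1) ^ (-r)) := by
  have h0 : Summable (fun n : ℤ => |(n:ℝ)| ^ (-r)) := Real.summable_abs_int_rpow hr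
  have h1 : Summable (fun n : ℤ => if n = 0 then (1:ℝ) else 0) := by
    apply summable_of_ne_finset_zero (s := {0})
    intro n hn
    simp only [Finset.mem_singleton] at hn
    simp [hn]
  refine (h0.add h1).congr fun n => ?_
  by_cases h : n = 0
  · subst h
    simp [Real.zero_rpow (show -r ≠ 0 by intro h; simp at h; linarith), Real.one_rpow]
  · have : (1:ℝ) ≤ |(n:ℝ)| := by
      rw [← Int.cast_abs]
      exact_mod_cast Int.one_le_abs (by exact_mod_cast h)
    simp [h, max_eq_left this]

lemma aux_floor_half {x : ℝ} (hx : 1 ≤ x) : x / 2 ≤ ((⌊x⌋.toNat : ℤ) : ℝ) := by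
  have h1 : (1:ℤ) ≤ ⌊x⌋ := Int.le_floor.mpr (by exact_mod_cast hx)
  rw [Int.toNat_of_nonneg (by linarith)]
  rcases le_or_gt x 2 with h | h
  · calc x / 2 ≤ 1 := by linarith
    _ ≤ (⌊x⌋ : ℝ) := by exact_mod_cast h1
  · have := Int.sub_one_lt_floor x
    linarith

lemma aux_div (q1 q2 q3 : ℝ) (hq1 : 0 < q1) (hq2 : 0 < q2) (hq3 : 0 < q3)
    (hQ : 1 < 1/q1 + 1/q2 + 1/q3) :
    ¬ Summable (fun t : ℤ × ℤ × ℤ =>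
      (max (max ((max |(t.1:ℝ)| 1) ^ q1) ((max |(t.2.1:ℝ)| 1) ^ q2))
        ((max |(t.2.2:ℝ)| 1) ^ q3))⁻¹) := by
  intro hsum
  set Q := 1/q1 + 1/q2 + 1/q3 with hQdef
  set b := fun t : ℤ × ℤ × ℤ =>
      (max (max ((max |(t.1:ℝ)| 1) ^ q1) ((max |(t.2.1:ℝ)| 1) ^ q2))
        ((max |(t.2.2:ℝ)| 1) ^ q3))⁻¹ with hbdef
  have hmpos : ∀ t : ℤ × ℤ × ℤ, (0:ℝ) <
      max (max ((max |(t.1:ℝ)| 1) ^ q1) ((max |(t.2.1:ℝ)| 1) ^ q2))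
        ((max |(t.2.2:ℝ)| 1) ^ q3) := by
    intro t
    have h1 : (0:ℝ) < (max |(t.1:ℝ)| 1) ^ q1 := Real.rpow_pos_of_pos (by positivity) _
    exact lt_of_lt_of_le h1 (le_trans (le_max_left _ _) (le_max_left _ _))
  have hbnonneg : ∀ t, 0 ≤ b t := fun t => inv_nonneg.mpr (hmpos t).le
  set T := ∑' t, b t with hTdef
  have hT0 : 0 ≤ T := tsum_nonneg hbnonneg
  set B : ℝ := (8 * (T + 1)) ^ (Q - 1)⁻¹ with hBdef
  have hQ1 : 0 < Q - 1 := by linarith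
  have hbase : (1:ℝ) ≤ 8 * (T + 1) := by nlinarith
  have hB1 : 1 ≤ B := Real.one_le_rpow hbase (by positivity)
  have hB0 : 0 < B := by linarith
  have hBpow : B ^ (Q - 1) = 8 * (T + 1) :=
    Real.rpow_inv_rpow (by positivity) hQ1.ne'
  -- the box
  set F : Finset (ℤ × ℤ × ℤ) :=
    (Finset.Icc 1 ⌊B ^ (1/q1)⌋) ×ˢ ((Finset.Icc 1 ⌊B ^ (1/q2)⌋) ×ˢ (Finset.Icc 1 ⌊B ^ (1/q3)⌋))
    with hFdef
  -- bound on each coordinate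
  have key : ∀ q : ℝ, 0 < q → ∀ n : ℤ, n ∈ Finset.Icc 1 ⌊B ^ (1/q)⌋ →
      (max |(n:ℝ)| 1) ^ q ≤ B := by
    intro q hq n hn
    rw [Finset.mem_Icc] at hn
    have hn1 : (1:ℝ) ≤ (n:ℝ) := by exact_mod_cast hn.1
    have hnB : (n:ℝ) ≤ B ^ (1/q) := by
      calc (n:ℝ) ≤ (⌊B ^ (1/q)⌋ : ℝ) := by exact_mod_cast hn.2
      _ ≤ B ^ (1/q) := Int.floor_le _
    have habs : max |(n:ℝ)| 1 = (n:ℝ) := by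
      rw [abs_of_pos (by linarith), max_eq_left hn1]
    rw [habs]
    calc (n:ℝ) ^ q ≤ (B ^ (1/q)) ^ q :=
          Real.rpow_le_rpow (by linarith) hnB hq.le
    _ = B := by
          rw [← Real.rpow_mul hB0.le, one_div, inv_mul_cancel₀ hq.ne', Real.rpow_one]
  -- each term on the box is ≥ B⁻¹
  have hterm : ∀ t ∈ F, B⁻¹ ≤ b t := by
    intro t ht
    rw [hFdef, Finset.mem_product, Finset.mem_product] at ht
    have h1 := key q1 hq1 t.1 ht.1
    have h2 := key q2 hq2 t.2.1 ht.2.1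
    have h3 := key q3 hq3 t.2.2 ht.2.2
    have : max (max ((max |(t.1:ℝ)| 1) ^ q1) ((max |(t.2.1:ℝ)| 1) ^ q2))
        ((max |(t.2.2:ℝ)| 1) ^ q3) ≤ B := by
      exact max_le (max_le h1 h2) h3
    exact inv_anti₀ (hmpos t) this
  -- sum over box lower bound
  have hsumF : (F.card : ℝ) * B⁻¹ ≤ ∑ t ∈ F, b t := by
    calc (F.card : ℝ) * B⁻¹ = ∑ _t ∈ F, B⁻¹ := by
          rw [Finset.sum_const, nsmul_eq_mul]
    _ ≤ ∑ t ∈ F, b t := Finset.sum_le_sum hterm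
  -- cardinality lower bound
  have hcard : B ^ Q / 8 ≤ (F.card : ℝ) := by
    have hc : F.card = (⌊B ^ (1/q1)⌋.toNat) * ((⌊B ^ (1/q2)⌋.toNat) * (⌊B ^ (1/q3)⌋.toNat)) := by
      rw [hFdef, Finset.card_product, Finset.card_product, Int.card_Icc]
      norm_num
    have hf : ∀ q : ℝ, 0 < q → B ^ (1/q) / 2 ≤ ((⌊B ^ (1/q)⌋.toNat : ℤ) : ℝ) := by
      intro q hq
      exact aux_floor_half (Real.one_le_rpow hB1 (by positivity))
    have f1 := hf q1 hq1; have f2 := hf q2 hq2; have f3 := hf q3 hq3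
    have hp1 : (0:ℝ) < B ^ (1/q1) := Real.rpow_pos_of_pos hB0 _
    have hp2 : (0:ℝ) < B ^ (1/q2) := Real.rpow_pos_of_pos hB0 _
    have hp3 : (0:ℝ) < B ^ (1/q3) := Real.rpow_pos_of_pos hB0 _
    have hprod : B ^ (1/q1) * (B ^ (1/q2) * B ^ (1/q3)) = B ^ Q := by
      rw [← Real.rpow_add hB0, ← Real.rpow_add hB0, hQdef]
      ring_nf
    rw [hc]
    push_cast
    push_cast at f1 f2 f3
    calc B ^ Q / 8 = B ^ (1/q1) / 2 * (B ^ (1/q2) / 2 * (B ^ (1/q3) / 2)) := by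
          rw [← hprod]; ring
    _ ≤ _ := by
          apply mul_le_mul f1 _ (by positivity) (le_trans (by positivity) f1)
          exact mul_le_mul f2 f3 (by positivity) (le_trans (by positivity) f2)
  -- combine
  have hfin : T + 1 ≤ ∑ t ∈ F, b t := by
    have h8 : B ^ Q / 8 * B⁻¹ = (T + 1) := by
      have : B ^ Q * B⁻¹ = B ^ (Q - 1) := by
        rw [Real.rpow_sub hB0, Real.rpow_one, div_eq_mul_inv]
      calc B ^ Q / 8 * B⁻¹ = (B ^ Q * B⁻¹) / 8 := by ring
      _ = B ^ (Q - 1) / 8 := by rw [this]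
      _ = T + 1 := by rw [hBpow]; ring
    calc T + 1 = B ^ Q / 8 * B⁻¹ := h8.symm
    _ ≤ (F.card : ℝ) * B⁻¹ := by
          apply mul_le_mul_of_nonneg_right hcard (by positivity)
    _ ≤ ∑ t ∈ F, b t := hsumF
  have hle : ∑ t ∈ F, b t ≤ T := Summable.sum_le_tsum F (fun t _ => hbnonneg t) hsum
  linarith
set_option maxHeartbeats 1600000 in
theorem stmt_1 (q1 q2 q3 c1 c2 c3 ν : ℝ)
    (hq1 : 0 < q1) (hq2 : 0 < q2) (hq3 : 0 < q3)
    (hc1 : 0 < c1) (hc2 : 0 < c2) (hc3 : 0 < c3) (hν : 0 < ν)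
    (g : ℤ × ℤ × ℤ → ℝ) (hg : ∃ M : ℝ, ∀ t, |g t| ≤ M)
    (a : ℤ × ℤ × ℤ → ℝ)
    (ha : ∀ t : ℤ × ℤ × ℤ, a t = g t /
      (c1 * (max |(t.1 : ℝ)| 1) ^ (q1 / ν) + c2 * (max |(t.2.1 : ℝ)| 1) ^ (q2 / ν) +
        c3 * (max |(t.2.2 : ℝ)| 1) ^ (q3 / ν)) ^ ν)
    (hQlow : 1 < 1 / q1 + 1 / q2 + 1 / q3)
    (hQup : 1 / q1 + 1 / q2 + 1 / q3 < 2) :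
    Summable (fun t : ℤ × ℤ × ℤ => (a t) ^ 2) ∧
      ∀ ginf : ℝ, 0 < ginf → Tendsto g cofinite (nhds ginf) →
        ¬ Summable (fun t : ℤ × ℤ × ℤ => |a t|) := by
  obtain ⟨M, hM⟩ := hg
  have hM0 : 0 ≤ M := le_trans (abs_nonneg _) (hM 0)
  set Q : ℝ := 1 / q1 + 1 / q2 + 1 / q3 with hQdef
  have hQ0 : 0 < Q := by positivity
  set x1 : ℤ × ℤ × ℤ → ℝ := fun t => max |(t.1 : ℝ)| 1 with hx1def
  set x2 : ℤ × ℤ × ℤ → ℝ := fun t => max |(t.2.1 : ℝ)| 1 with hx2def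
  set x3 : ℤ × ℤ × ℤ → ℝ := fun t => max |(t.2.2 : ℝ)| 1 with hx3def
  set D : ℤ × ℤ × ℤ → ℝ := fun t =>
    c1 * x1 t ^ (q1 / ν) + c2 * x2 t ^ (q2 / ν) + c3 * x3 t ^ (q3 / ν) with hDdef
  have hx1pos : ∀ t, (0:ℝ) < x1 t := fun t => lt_of_lt_of_le one_pos (le_max_right _ _)
  have hx2pos : ∀ t, (0:ℝ) < x2 t := fun t => lt_of_lt_of_le one_pos (le_max_right _ _)
  have hx3pos : ∀ t, (0:ℝ) < x3 t := fun t => lt_of_lt_of_le one_pos (le_max_right _ _)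
  have hDpos : ∀ t, 0 < D t := by
    intro t
    have h1 : (0:ℝ) < x1 t ^ (q1 / ν) := Real.rpow_pos_of_pos (hx1pos t) _
    have h2 : (0:ℝ) < x2 t ^ (q2 / ν) := Real.rpow_pos_of_pos (hx2pos t) _
    have h3 : (0:ℝ) < x3 t ^ (q3 / ν) := Real.rpow_pos_of_pos (hx3pos t) _
    rw [hDdef]
    positivity
  have hDν : ∀ t, 0 < D t ^ ν := fun t => Real.rpow_pos_of_pos (hDpos t) _
  constructor
  · -- Part 1: summability of squares
    set r : ℝ := 2 / Q with hrdef
    have hr : 1 < r := (one_lt_div hQ0).mpr hQup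
    set w1 : ℝ := 1 / (q1 * Q) with hw1def
    set w2 : ℝ := 1 / (q2 * Q) with hw2def
    set w3 : ℝ := 1 / (q3 * Q) with hw3def
    have hw1 : 0 < w1 := by positivity
    have hw2 : 0 < w2 := by positivity
    have hw3 : 0 < w3 := by positivity
    have hwsum : w1 + w2 + w3 = 1 := by
      rw [hw1def, hw2def, hw3def, hQdef]
      field_simp
    set K0 : ℝ := c1 ^ w1 * c2 ^ w2 * c3 ^ w3 with hK0def
    have hK0 : 0 < K0 := by
      have := Real.rpow_pos_of_pos hc1 w1
      have := Real.rpow_pos_of_pos hc2 w2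
      have := Real.rpow_pos_of_pos hc3 w3
      rw [hK0def]; positivity
    set C : ℝ := M ^ 2 / (K0 ^ ν) ^ 2 with hCdef
    have hKν : 0 < K0 ^ ν := Real.rpow_pos_of_pos hK0 _
    have hbound : ∀ t, a t ^ 2 ≤ C * (x1 t ^ (-r) * (x2 t ^ (-r) * x3 t ^ (-r))) := by
      intro t
      have hX1 := hx1pos t; have hX2 := hx2pos t; have hX3 := hx3pos t
      have hD0 := hDpos t
      have e1 : c1 * x1 t ^ (q1 / ν) ≤ D t := by
        have h2 : (0:ℝ) < c2 * x2 t ^ (q2 / ν) := by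
          have := Real.rpow_pos_of_pos hX2 (q2/ν); positivity
        have h3 : (0:ℝ) < c3 * x3 t ^ (q3 / ν) := by
          have := Real.rpow_pos_of_pos hX3 (q3/ν); positivity
        rw [hDdef]; dsimp only; linarith
      have e2 : c2 * x2 t ^ (q2 / ν) ≤ D t := by
        have h1 : (0:ℝ) < c1 * x1 t ^ (q1 / ν) := by
          have := Real.rpow_pos_of_pos hX1 (q1/ν); positivity
        have h3 : (0:ℝ) < c3 * x3 t ^ (q3 / ν) := by
          have := Real.rpow_pos_of_pos hX3 (q3/ν); positivity
        rw [hDdef]; dsimp only; linarith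
      have e3 : c3 * x3 t ^ (q3 / ν) ≤ D t := by
        have h1 : (0:ℝ) < c1 * x1 t ^ (q1 / ν) := by
          have := Real.rpow_pos_of_pos hX1 (q1/ν); positivity
        have h2 : (0:ℝ) < c2 * x2 t ^ (q2 / ν) := by
          have := Real.rpow_pos_of_pos hX2 (q2/ν); positivity
        rw [hDdef]; dsimp only; linarith
      -- D = D^w1 * D^w2 * D^w3
      have hsplit : D t = D t ^ w1 * D t ^ w2 * D t ^ w3 := by
        rw [← Real.rpow_add hD0, ← Real.rpow_add hD0, hwsum, Real.rpow_one]
      -- lower bounds for each factor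
      have f1 : (c1 * x1 t ^ (q1 / ν)) ^ w1 ≤ D t ^ w1 :=
        Real.rpow_le_rpow (by positivity) e1 hw1.le
      have f2 : (c2 * x2 t ^ (q2 / ν)) ^ w2 ≤ D t ^ w2 :=
        Real.rpow_le_rpow (by positivity) e2 hw2.le
      have f3 : (c3 * x3 t ^ (q3 / ν)) ^ w3 ≤ D t ^ w3 :=
        Real.rpow_le_rpow (by positivity) e3 hw3.le
      have g1 : (c1 * x1 t ^ (q1 / ν)) ^ w1 = c1 ^ w1 * x1 t ^ (1 / (ν * Q)) := by
        have hexp : q1 / ν * w1 = 1 / (ν * Q) := by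
          rw [hw1def]; field_simp
        rw [Real.mul_rpow hc1.le (by positivity), ← Real.rpow_mul hX1.le, hexp]
      have g2 : (c2 * x2 t ^ (q2 / ν)) ^ w2 = c2 ^ w2 * x2 t ^ (1 / (ν * Q)) := by
        have hexp : q2 / ν * w2 = 1 / (ν * Q) := by
          rw [hw2def]; field_simp
        rw [Real.mul_rpow hc2.le (by positivity), ← Real.rpow_mul hX2.le, hexp]
      have g3 : (c3 * x3 t ^ (q3 / ν)) ^ w3 = c3 ^ w3 * x3 t ^ (1 / (ν * Q)) := by
        have hexp : q3 / ν * w3 = 1 / (ν * Q) := by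
          rw [hw3def]; field_simp
        rw [Real.mul_rpow hc3.le (by positivity), ← Real.rpow_mul hX3.le, hexp]
      -- product lower bound for D
      set P : ℝ := x1 t ^ (1 / (ν * Q)) * x2 t ^ (1 / (ν * Q)) * x3 t ^ (1 / (ν * Q))
        with hPdef
      have hP0 : 0 < P := by
        have := Real.rpow_pos_of_pos hX1 (1/(ν*Q))
        have := Real.rpow_pos_of_pos hX2 (1/(ν*Q))
        have := Real.rpow_pos_of_pos hX3 (1/(ν*Q))
        rw [hPdef]; positivity
      have hDlow : K0 * P ≤ D t := by
        rw [hsplit]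
        calc K0 * P = (c1 ^ w1 * x1 t ^ (1/(ν*Q))) * ((c2 ^ w2 * x2 t ^ (1/(ν*Q))) *
              (c3 ^ w3 * x3 t ^ (1/(ν*Q)))) := by rw [hK0def, hPdef]; ring
        _ = (c1 * x1 t ^ (q1 / ν)) ^ w1 * ((c2 * x2 t ^ (q2 / ν)) ^ w2 *
              (c3 * x3 t ^ (q3 / ν)) ^ w3) := by rw [g1, g2, g3]
        _ ≤ D t ^ w1 * (D t ^ w2 * D t ^ w3) := by
              apply mul_le_mul f1 _ (by positivity) (by positivity)
              apply mul_le_mul f2 f3 (by positivity) (by positivity)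
        _ = D t ^ w1 * D t ^ w2 * D t ^ w3 := by ring
      -- raise to power ν
      have hDν_low : K0 ^ ν * P ^ ν ≤ D t ^ ν := by
        calc K0 ^ ν * P ^ ν = (K0 * P) ^ ν := (Real.mul_rpow hK0.le hP0.le).symm
        _ ≤ D t ^ ν := Real.rpow_le_rpow (by positivity) hDlow hν.le
      have hPν : P ^ ν = x1 t ^ (1 / Q) * x2 t ^ (1 / Q) * x3 t ^ (1 / Q) := by
        rw [hPdef, Real.mul_rpow (by positivity) (by positivity),
          Real.mul_rpow (by positivity) (by positivity),
          ← Real.rpow_mul hX1.le, ← Real.rpow_mul hX2.le, ← Real.rpow_mul hX3.le,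
          show 1 / (ν * Q) * ν = 1 / Q by field_simp]
      -- conclude pointwise bound
      have hPνpos : 0 < P ^ ν := Real.rpow_pos_of_pos hP0 _
      have key2 : a t ^ 2 ≤ M ^ 2 / (K0 ^ ν * P ^ ν) ^ 2 := by
        rw [ha t, div_pow]
        apply div_le_div₀ (by positivity) _
          (pow_pos (mul_pos hKν hPνpos) 2)
          (pow_le_pow_left₀ (mul_pos hKν hPνpos).le hDν_low 2)
        calc g t ^ 2 = |g t| ^ 2 := (sq_abs _).symm
        _ ≤ M ^ 2 := pow_le_pow_left₀ (abs_nonneg _) (hM t) 2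
      have hsq : ∀ X : ℝ, 0 < X → (X ^ (1/Q)) ^ 2 = X ^ r := by
        intro X hX
        rw [sq, ← Real.rpow_add hX, hrdef]
        congr 1
        ring
      have hr1ne : (x1 t ^ r) ≠ 0 := (Real.rpow_pos_of_pos hX1 r).ne'
      have hr2ne : (x2 t ^ r) ≠ 0 := (Real.rpow_pos_of_pos hX2 r).ne'
      have hr3ne : (x3 t ^ r) ≠ 0 := (Real.rpow_pos_of_pos hX3 r).ne'
      have hKνne : (K0 ^ ν) ≠ 0 := hKν.ne'
      calc a t ^ 2 ≤ M ^ 2 / (K0 ^ ν * P ^ ν) ^ 2 := key2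
      _ = C * (x1 t ^ (-r) * (x2 t ^ (-r) * x3 t ^ (-r))) := by
          rw [hPν, Real.rpow_neg hX1.le, Real.rpow_neg hX2.le, Real.rpow_neg hX3.le,
            mul_pow, mul_pow, mul_pow, hsq _ hX1, hsq _ hX2, hsq _ hX3, hCdef]
          simp only [div_eq_mul_inv, mul_inv]
          ring
    -- summability of the dominating series
    have hs1 := aux_sum1d hr
    have hnn : ∀ n : ℤ, 0 ≤ (max |(n:ℝ)| 1) ^ (-r) :=
      fun n => Real.rpow_nonneg (by positivity) _
    have hs23 := Summable.mul_of_nonneg (f := fun n : ℤ => (max |(n:ℝ)| 1) ^ (-r))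
        (g := fun n : ℤ => (max |(n:ℝ)| 1) ^ (-r)) hs1 hs1 hnn hnn
    have hnn2 : ∀ p : ℤ × ℤ, 0 ≤ (max |(p.1:ℝ)| 1) ^ (-r) * (max |(p.2:ℝ)| 1) ^ (-r) :=
      fun p => mul_nonneg (hnn _) (hnn _)
    have hs123 := Summable.mul_of_nonneg (f := fun n : ℤ => (max |(n:ℝ)| 1) ^ (-r))
        (g := fun p : ℤ × ℤ => (max |(p.1:ℝ)| 1) ^ (-r) * (max |(p.2:ℝ)| 1) ^ (-r))
        hs1 hs23 hnn hnn2
    exact Summable.of_nonneg_of_le (fun t => sq_nonneg _) hbound (hs123.mul_left C)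
  · -- Part 2: divergence of absolute values
    intro ginf hginf htend hsum
    set m : ℤ × ℤ × ℤ → ℝ := fun t =>
      max (max (x1 t ^ q1) (x2 t ^ q2)) (x3 t ^ q3) with hmdef
    have hmpos : ∀ t, 0 < m t := by
      intro t
      have h1 : (0:ℝ) < x1 t ^ q1 := Real.rpow_pos_of_pos (hx1pos t) _
      exact lt_of_lt_of_le h1 (le_trans (le_max_left _ _) (le_max_left _ _))
    set C2 : ℝ := (c1 + c2 + c3) ^ ν with hC2def
    have hC2 : 0 < C2 := Real.rpow_pos_of_pos (by linarith) _
    set K1 : ℝ := (ginf / 2) / C2 with hK1def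
    have hK1 : 0 < K1 := by positivity
    -- eventually g is large
    have hcof : ∀ᶠ t in cofinite, ginf / 2 < g t :=
      htend.eventually (eventually_gt_nhds (by linarith))
    have hfin : {t : ℤ × ℤ × ℤ | ¬ ginf / 2 < g t}.Finite := by
      rwa [Filter.eventually_cofinite] at hcof
    -- pointwise lower bound on the good set
    have hlow : ∀ t : ℤ × ℤ × ℤ, ginf / 2 < g t → K1 * (m t)⁻¹ ≤ |a t| := by
      intro t hgt
      have hX1 := hx1pos t; have hX2 := hx2pos t; have hX3 := hx3pos t
      have hm0 := hmpos t
      have hone : ∀ (X q' : ℝ), 0 < X → 0 < q' → X ^ q' ≤ m t →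
          X ^ (q' / ν) ≤ m t ^ (1/ν) := by
        intro X q' hX hq' hle
        have : X ^ (q' / ν) = (X ^ q') ^ (1/ν) := by
          rw [← Real.rpow_mul hX.le]
          congr 1
          field_simp
        rw [this]
        exact Real.rpow_le_rpow (by positivity) hle (by positivity)
      have h1 : x1 t ^ (q1 / ν) ≤ m t ^ (1/ν) :=
        hone _ _ hX1 hq1 (le_trans (le_max_left _ _) (le_max_left _ _))
      have h2 : x2 t ^ (q2 / ν) ≤ m t ^ (1/ν) :=
        hone _ _ hX2 hq2 (le_trans (le_max_right _ _) (le_max_left _ _))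
      have h3 : x3 t ^ (q3 / ν) ≤ m t ^ (1/ν) :=
        hone _ _ hX3 hq3 (le_max_right _ _)
      have hDle : D t ≤ (c1 + c2 + c3) * m t ^ (1/ν) := by
        rw [hDdef]
        dsimp only
        nlinarith [mul_le_mul_of_nonneg_left h1 hc1.le,
          mul_le_mul_of_nonneg_left h2 hc2.le, mul_le_mul_of_nonneg_left h3 hc3.le]
      have hmν : (m t ^ (1/ν)) ^ ν = m t := by
        rw [← Real.rpow_mul hm0.le]
        have : 1 / ν * ν = 1 := by field_simp
        rw [this, Real.rpow_one]
      have hDνle : D t ^ ν ≤ C2 * m t := by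
        calc D t ^ ν ≤ ((c1 + c2 + c3) * m t ^ (1/ν)) ^ ν :=
              Real.rpow_le_rpow (hDpos t).le hDle hν.le
        _ = (c1 + c2 + c3) ^ ν * (m t ^ (1/ν)) ^ ν :=
              Real.mul_rpow (by linarith) (by positivity)
        _ = C2 * m t := by rw [hmν, hC2def]
      have habs : |a t| = |g t| / D t ^ ν := by
        rw [ha t, abs_div, abs_of_pos (hDν t)]
      rw [habs]
      have hgabs : ginf / 2 ≤ |g t| := le_trans hgt.le (le_abs_self _)
      calc K1 * (m t)⁻¹ = (ginf / 2) / (C2 * m t) := by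
            rw [hK1def, ← div_eq_mul_inv, div_div]
      _ ≤ |g t| / D t ^ ν := div_le_div₀ (abs_nonneg _) hgabs (hDν t) hDνle
    -- derive summability of (m t)⁻¹ and contradict aux_div
    set S : Set (ℤ × ℤ × ℤ) := {t | ¬ ginf / 2 < g t} with hSdef
    have hind : Summable (S.indicator (fun t => K1 * (m t)⁻¹)) := by
      apply summable_of_ne_finset_zero (s := hfin.toFinset)
      intro t ht
      rw [Set.Finite.mem_toFinset] at ht
      exact Set.indicator_of_notMem ht _
    have hcmp : ∀ t, K1 * (m t)⁻¹ ≤ |a t| + S.indicator (fun t => K1 * (m t)⁻¹) t := by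
      intro t
      by_cases ht : t ∈ S
      · rw [Set.indicator_of_mem ht]
        have : (0:ℝ) ≤ |a t| := abs_nonneg _
        linarith
      · rw [Set.indicator_of_notMem ht]
        have hgt : ginf / 2 < g t := not_not.mp ht
        have := hlow t hgt
        linarith
    have hsm : Summable (fun t : ℤ × ℤ × ℤ => K1 * (m t)⁻¹) :=
      Summable.of_nonneg_of_le
        (fun t => mul_nonneg hK1.le (inv_nonneg.mpr (hmpos t).le)) hcmp (hsum.add hind)
    have hsm' : Summable (fun t : ℤ × ℤ × ℤ => (m t)⁻¹) := by
      have := hsm.mul_left K1⁻¹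
      refine this.congr fun t => ?_
      rw [inv_mul_cancel_left₀ hK1.ne']
    exact aux_div q1 q2 q3 hq1 hq2 hq3 hQlow hsm'
end

section
/- For any δ > 0 and h > 0, the Lebesgue integral ∫_{{t∈ℝ³ : |t| ≤ δ}} ρ(t)^{−h} dt is finite if and only if Q > h. -/
open MeasureTheory Set

lemma aux_lintegral_Ioi_rpow {a p : ℝ} (ha : 0 < a) :
    (∫⁻ x in Set.Ioi a, ENNReal.ofReal (x ^ p)) < ⊤ ↔ p < -1 := by
  have hm : Measurable fun x : ℝ => x ^ p := by fun_prop
  have hnn : 0 ≤ᵐ[volume.restrict (Set.Ioi a)] fun x : ℝ => x ^ p := by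
    filter_upwards [ae_restrict_mem measurableSet_Ioi] with x hx
    exact Real.rpow_nonneg (le_of_lt (ha.trans hx)) p
  rw [← hasFiniteIntegral_iff_ofReal hnn]
  constructor
  · intro hfi
    exact (integrableOn_Ioi_rpow_iff ha).1 ⟨hm.aestronglyMeasurable, hfi⟩
  · intro hp
    exact (integrableOn_Ioi_rpow_of_lt hp ha).hasFiniteIntegral

lemma aux_rpow_flip {x a b : ℝ} (hx : 0 ≤ x) (hab : a * b = 1) : (x ^ a) ^ b = x := by
  rw [← Real.rpow_mul hx, hab, Real.rpow_one]

lemma aux_volume_prod3 (A B C : Set ℝ) :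
    (volume ((A ×ˢ (B ×ˢ C)) : Set (ℝ × ℝ × ℝ))) = volume A * volume B * volume C := by
  rw [Measure.volume_eq_prod, Measure.prod_prod, Measure.volume_eq_prod, Measure.prod_prod,
    mul_assoc]

theorem stmt_3 (q1 q2 q3 : ℝ) (hq1 : 0 < q1) (hq2 : 0 < q2) (hq3 : 0 < q3)
    (δ h : ℝ) (hδ : 0 < δ) (hh : 0 < h) :
    (∫⁻ t in {t : ℝ × ℝ × ℝ | max (max |t.1| |t.2.1|) |t.2.2| ≤ δ},
        ENNReal.ofReal ((|t.1| ^ q1 + |t.2.1| ^ q2 + |t.2.2| ^ q3) ^ (-h))) < ⊤ ↔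
      h < 1 / q1 + 1 / q2 + 1 / q3 := by
  set Q : ℝ := 1 / q1 + 1 / q2 + 1 / q3 with hQdef
  have hQ : 0 < Q := by positivity
  set ρ : ℝ × ℝ × ℝ → ℝ := fun t => |t.1| ^ q1 + |t.2.1| ^ q2 + |t.2.2| ^ q3 with hρdef
  set f : ℝ × ℝ × ℝ → ℝ := fun t => ρ t ^ (-h) with hfdef
  set B : Set (ℝ × ℝ × ℝ) := {t | max (max |t.1| |t.2.1|) |t.2.2| ≤ δ} with hBdef
  have hρnn : ∀ t, 0 ≤ ρ t := fun t => by positivity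
  have hmρ : Measurable ρ := by fun_prop
  have hmf : Measurable f := by fun_prop
  have hBeq : B = Icc (-δ) δ ×ˢ (Icc (-δ) δ ×ˢ Icc (-δ) δ) := by
    ext ⟨x, y, z⟩
    simp only [hBdef, mem_setOf_eq, max_le_iff, mem_prod, mem_Icc, ← abs_le]
    tauto
  have hBmeas : MeasurableSet B := by
    rw [hBeq]; exact measurableSet_Icc.prod (measurableSet_Icc.prod measurableSet_Icc)
  -- layer cake
  rw [lintegral_eq_lintegral_meas_lt (volume.restrict B)
    (Filter.Eventually.of_forall fun t => Real.rpow_nonneg (hρnn t) _) hmf.aemeasurable]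
  set G : ℝ → ENNReal := fun s => (volume.restrict B) {a | s < f a} with hGdef
  have hGvol : ∀ s, G s = volume ({a | s < f a} ∩ B) := fun s =>
    Measure.restrict_apply (measurableSet_lt measurable_const hmf)
  -- the radius function
  have hrpos : ∀ s : ℝ, 0 < s → 0 < s ^ (-(1/h)) := fun s hs => Real.rpow_pos_of_pos hs _
  -- f t > s implies ρ t < r s
  have hkey : ∀ s : ℝ, 0 < s → ∀ t, s < f t → ρ t < s ^ (-(1/h)) := by
    intro s hs t hts
    have hρpos : 0 < ρ t := by
      rcases lt_or_eq_of_le (hρnn t) with H | H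
      · exact H
      · exfalso
        simp only [hfdef, ← H, Real.zero_rpow (neg_ne_zero.2 hh.ne')] at hts
        exact absurd hts (not_lt.2 hs.le)
    have h1 : (f t) ^ (-(1/h)) < s ^ (-(1/h)) :=
      Real.rpow_lt_rpow_of_neg hs hts (neg_lt_zero.2 (by positivity))
    rwa [hfdef, aux_rpow_flip hρpos.le (by field_simp)] at h1
  -- upper bound for G
  have hGupper : ∀ s : ℝ, 0 < s →
      G s ≤ ENNReal.ofReal 8 * ENNReal.ofReal (s ^ (-(Q / h))) := by
    intro s hs
    set r : ℝ := s ^ (-(1/h)) with hrdef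
    have hr : 0 < r := hrpos s hs
    have hsub : {a | s < f a} ∩ B ⊆
        Ioo (-(r ^ (1/q1))) (r ^ (1/q1)) ×ˢ
          (Ioo (-(r ^ (1/q2))) (r ^ (1/q2))) ×ˢ Ioo (-(r ^ (1/q3))) (r ^ (1/q3)) := by
      rintro ⟨x, y, z⟩ ⟨hts, -⟩
      have hρr : ρ (x, y, z) < r := hkey s hs _ hts
      have hx : |x| ^ q1 < r := by
        refine lt_of_le_of_lt ?_ hρr
        have := Real.rpow_nonneg (abs_nonneg y) q2
        have := Real.rpow_nonneg (abs_nonneg z) q3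
        simp only [hρdef]; linarith
      have hy : |y| ^ q2 < r := by
        refine lt_of_le_of_lt ?_ hρr
        have := Real.rpow_nonneg (abs_nonneg x) q1
        have := Real.rpow_nonneg (abs_nonneg z) q3
        simp only [hρdef]; linarith
      have hz : |z| ^ q3 < r := by
        refine lt_of_le_of_lt ?_ hρr
        have := Real.rpow_nonneg (abs_nonneg x) q1
        have := Real.rpow_nonneg (abs_nonneg y) q2
        simp only [hρdef]; linarith
      have hx' : |x| < r ^ (1/q1) := by
        have := Real.rpow_lt_rpow (Real.rpow_nonneg (abs_nonneg x) q1) hx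
          (by positivity : 0 < 1/q1)
        rwa [aux_rpow_flip (abs_nonneg x) (by field_simp)] at this
      have hy' : |y| < r ^ (1/q2) := by
        have := Real.rpow_lt_rpow (Real.rpow_nonneg (abs_nonneg y) q2) hy
          (by positivity : 0 < 1/q2)
        rwa [aux_rpow_flip (abs_nonneg y) (by field_simp)] at this
      have hz' : |z| < r ^ (1/q3) := by
        have := Real.rpow_lt_rpow (Real.rpow_nonneg (abs_nonneg z) q3) hz
          (by positivity : 0 < 1/q3)
        rwa [aux_rpow_flip (abs_nonneg z) (by field_simp)] at this
      exact ⟨abs_lt.1 hx', abs_lt.1 hy', abs_lt.1 hz'⟩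
    calc G s ≤ volume (Ioo (-(r ^ (1/q1))) (r ^ (1/q1)) ×ˢ
          (Ioo (-(r ^ (1/q2))) (r ^ (1/q2))) ×ˢ Ioo (-(r ^ (1/q3))) (r ^ (1/q3))) := by
          rw [hGvol]; exact measure_mono hsub
      _ = ENNReal.ofReal (2 * r ^ (1/q1)) * ENNReal.ofReal (2 * r ^ (1/q2)) *
            ENNReal.ofReal (2 * r ^ (1/q3)) := by
          rw [aux_volume_prod3]
          simp only [Real.volume_Ioo, sub_neg_eq_add, ← two_mul]
      _ = ENNReal.ofReal 8 * ENNReal.ofReal (s ^ (-(Q / h))) := by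
          rw [← ENNReal.ofReal_mul (by positivity), ← ENNReal.ofReal_mul (by positivity),
            ← ENNReal.ofReal_mul (by norm_num)]
          congr 1
          have hexp : r ^ (1/q1) * r ^ (1/q2) * r ^ (1/q3) = s ^ (-(Q/h)) := by
            rw [← Real.rpow_add hr, ← Real.rpow_add hr, hrdef, ← Real.rpow_mul hs.le]
            congr 1
            rw [hQdef]; ring
          calc 2 * r ^ (1/q1) * (2 * r ^ (1/q2)) * (2 * r ^ (1/q3))
              = 8 * (r ^ (1/q1) * r ^ (1/q2) * r ^ (1/q3)) := by ring
            _ = 8 * s ^ (-(Q/h)) := by rw [hexp]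
  constructor
  · -- finiteness implies h < Q
    intro hfin
    by_contra hge
    push_neg at hge   -- Q ≤ h
    have hexp' : (-1 : ℝ) ≤ -(Q / h) := by
      rw [neg_le_neg_iff]
      exact (div_le_one hh).2 hge
    set c : ℝ := min (δ ^ q1) (min (δ ^ q2) (δ ^ q3)) with hcdef
    have hc : 0 < c := by
      simp only [hcdef, lt_min_iff]
      exact ⟨Real.rpow_pos_of_pos hδ _, Real.rpow_pos_of_pos hδ _, Real.rpow_pos_of_pos hδ _⟩
    set s0 : ℝ := max 1 (c ^ (-h)) with hs0def
    have hs0pos : 0 < s0 := lt_of_lt_of_le zero_lt_one (le_max_left _ _)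
    have hGlower : ∀ s : ℝ, s0 < s →
        ENNReal.ofReal ((1/3 : ℝ) ^ Q) * ENNReal.ofReal (s ^ (-(Q / h))) ≤ G s := by
      intro s hs
      have hspos : 0 < s := lt_trans hs0pos hs
      set r : ℝ := s ^ (-(1/h)) with hrdef
      have hr : 0 < r := hrpos s hspos
      have hrc : r ≤ c := by
        have h1 : c ^ (-h) < s := lt_of_le_of_lt (le_max_right _ _) hs
        have h2 : s ^ (-(1/h)) < (c ^ (-h)) ^ (-(1/h)) :=
          Real.rpow_lt_rpow_of_neg (Real.rpow_pos_of_pos hc _) h1 (neg_lt_zero.2 (by positivity))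
        rw [aux_rpow_flip hc.le (by field_simp)] at h2
        exact h2.le
      have hr3 : 0 < r / 3 := by linarith
      set a1 : ℝ := (r/3) ^ (1/q1) with ha1def
      set a2 : ℝ := (r/3) ^ (1/q2) with ha2def
      set a3 : ℝ := (r/3) ^ (1/q3) with ha3def
      have ha1δ : a1 ≤ δ := by
        have h1 : r/3 ≤ δ ^ q1 := le_trans (by linarith) (le_trans hrc (min_le_left _ _))
        calc a1 ≤ (δ ^ q1) ^ (1/q1) := Real.rpow_le_rpow hr3.le h1 (by positivity)
          _ = δ := aux_rpow_flip hδ.le (by field_simp)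
      have ha2δ : a2 ≤ δ := by
        have h1 : r/3 ≤ δ ^ q2 :=
          le_trans (by linarith) (le_trans hrc (le_trans (min_le_right _ _) (min_le_left _ _)))
        calc a2 ≤ (δ ^ q2) ^ (1/q2) := Real.rpow_le_rpow hr3.le h1 (by positivity)
          _ = δ := aux_rpow_flip hδ.le (by field_simp)
      have ha3δ : a3 ≤ δ := by
        have h1 : r/3 ≤ δ ^ q3 :=
          le_trans (by linarith) (le_trans hrc (le_trans (min_le_right _ _) (min_le_right _ _)))
        calc a3 ≤ (δ ^ q3) ^ (1/q3) := Real.rpow_le_rpow hr3.le h1 (by positivity)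
          _ = δ := aux_rpow_flip hδ.le (by field_simp)
      have hsubset : Ioo (0:ℝ) a1 ×ˢ (Ioo (0:ℝ) a2 ×ˢ Ioo (0:ℝ) a3) ⊆ {a | s < f a} ∩ B := by
        rintro ⟨x, y, z⟩ ⟨hx, hy, hz⟩
        simp only [mem_Ioo] at hx hy hz
        have hxq : |x| ^ q1 < r/3 := by
          rw [abs_of_pos hx.1]
          calc x ^ q1 < a1 ^ q1 := Real.rpow_lt_rpow hx.1.le hx.2 hq1
            _ = r/3 := aux_rpow_flip hr3.le (by field_simp)
        have hyq : |y| ^ q2 < r/3 := by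
          rw [abs_of_pos hy.1]
          calc y ^ q2 < a2 ^ q2 := Real.rpow_lt_rpow hy.1.le hy.2 hq2
            _ = r/3 := aux_rpow_flip hr3.le (by field_simp)
        have hzq : |z| ^ q3 < r/3 := by
          rw [abs_of_pos hz.1]
          calc z ^ q3 < a3 ^ q3 := Real.rpow_lt_rpow hz.1.le hz.2 hq3
            _ = r/3 := aux_rpow_flip hr3.le (by field_simp)
        have hρpos : 0 < ρ (x, y, z) := by
          have h1 : 0 < |x| ^ q1 := Real.rpow_pos_of_pos (abs_pos.2 hx.1.ne') q1
          have h2 := Real.rpow_nonneg (abs_nonneg y) q2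
          have h3 := Real.rpow_nonneg (abs_nonneg z) q3
          simp only [hρdef]; linarith
        have hρr : ρ (x, y, z) < r := by
          simp only [hρdef] at *; linarith
        constructor
        · show s < ρ (x, y, z) ^ (-h)
          have h2 : r ^ (-h) < ρ (x, y, z) ^ (-h) :=
            Real.rpow_lt_rpow_of_neg hρpos hρr (neg_lt_zero.2 hh)
          have h3 : r ^ (-h) = s := by rw [hrdef]; exact aux_rpow_flip hspos.le (by field_simp)
          linarith
        · show (x, y, z) ∈ B
          rw [hBeq]
          have hax : |x| ≤ δ := by rw [abs_of_pos hx.1]; exact le_trans hx.2.le ha1δ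
          have hay : |y| ≤ δ := by rw [abs_of_pos hy.1]; exact le_trans hy.2.le ha2δ
          have haz : |z| ≤ δ := by rw [abs_of_pos hz.1]; exact le_trans hz.2.le ha3δ
          simp only [mem_prod, mem_Icc, ← abs_le]
          exact ⟨hax, hay, haz⟩
      have hvol : volume (Ioo (0:ℝ) a1 ×ˢ (Ioo (0:ℝ) a2 ×ˢ Ioo (0:ℝ) a3))
          = ENNReal.ofReal ((1/3 : ℝ) ^ Q) * ENNReal.ofReal (s ^ (-(Q / h))) := by
        rw [aux_volume_prod3]
        simp only [Real.volume_Ioo, sub_zero]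
        rw [← ENNReal.ofReal_mul (Real.rpow_nonneg hr3.le _),
          ← ENNReal.ofReal_mul (by positivity),
          ← ENNReal.ofReal_mul (Real.rpow_nonneg (by norm_num) _)]
        congr 1
        have h1 : a1 * a2 * a3 = (r/3) ^ Q := by
          rw [ha1def, ha2def, ha3def, ← Real.rpow_add hr3, ← Real.rpow_add hr3]
        rw [h1, show r/3 = r * (1/3) by ring, Real.mul_rpow hr.le (by norm_num), hrdef,
          ← Real.rpow_mul hspos.le, show -(1/h) * Q = -(Q/h) by ring]
        ring
      calc ENNReal.ofReal ((1/3 : ℝ) ^ Q) * ENNReal.ofReal (s ^ (-(Q / h)))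
          = volume (Ioo (0:ℝ) a1 ×ˢ (Ioo (0:ℝ) a2 ×ˢ Ioo (0:ℝ) a3)) := hvol.symm
        _ ≤ volume ({a | s < f a} ∩ B) := measure_mono hsubset
        _ = G s := (hGvol s).symm
    have htop : (⊤ : ENNReal) ≤ ∫⁻ s in Ioi (0:ℝ), G s := by
      have hrp : (∫⁻ x in Ioi s0, ENNReal.ofReal (x ^ (-(Q/h)))) = ⊤ :=
        eq_top_iff.2 (not_lt.1 fun hlt =>
          absurd ((aux_lintegral_Ioi_rpow hs0pos).1 hlt) (not_lt.2 hexp'))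
      calc (⊤ : ENNReal)
          = ENNReal.ofReal ((1/3 : ℝ) ^ Q) * ∫⁻ x in Ioi s0, ENNReal.ofReal (x ^ (-(Q/h))) := by
            rw [hrp, ENNReal.mul_top]
            exact (ENNReal.ofReal_pos.2 (by positivity)).ne'
        _ = ∫⁻ x in Ioi s0, ENNReal.ofReal ((1/3 : ℝ) ^ Q) * ENNReal.ofReal (x ^ (-(Q/h))) :=
            (lintegral_const_mul _ (by fun_prop)).symm
        _ ≤ ∫⁻ x in Ioi s0, G x := by
            apply lintegral_mono_ae
            filter_upwards [ae_restrict_mem measurableSet_Ioi] with x hx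
            exact hGlower x hx
        _ ≤ ∫⁻ s in Ioi (0:ℝ), G s := lintegral_mono_set (Ioi_subset_Ioi hs0pos.le)
    exact absurd hfin (not_lt.2 htop)
  · -- h < Q implies finiteness
    intro hlt
    have hexp : -(Q / h) < -1 := by
      rw [neg_lt_neg_iff]
      exact (one_lt_div hh).2 hlt
    have hvolB : volume B < ⊤ := by
      rw [hBeq, aux_volume_prod3]
      exact ENNReal.mul_lt_top
        (ENNReal.mul_lt_top (by simp [Real.volume_Icc]) (by simp [Real.volume_Icc]))
        (by simp [Real.volume_Icc])
    have hsplit : (∫⁻ s in Ioi (0:ℝ), G s)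
        = (∫⁻ s in Ioc (0:ℝ) 1, G s) + ∫⁻ s in Ioi (1:ℝ), G s := by
      rw [← Ioc_union_Ioi_eq_Ioi (zero_le_one : (0:ℝ) ≤ 1),
        lintegral_union measurableSet_Ioi (Ioc_disjoint_Ioi le_rfl)]
    rw [hsplit]
    apply ENNReal.add_lt_top.2
    constructor
    · calc (∫⁻ _ in Ioc (0:ℝ) 1, G _) ≤ ∫⁻ _ in Ioc (0:ℝ) 1, volume B :=
          lintegral_mono fun s =>
            le_trans (measure_mono (subset_univ _)) (le_of_eq (Measure.restrict_apply_univ _))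
        _ = volume B * volume (Ioc (0:ℝ) 1) := setLIntegral_const _ _
        _ < ⊤ := ENNReal.mul_lt_top hvolB (by simp [Real.volume_Ioc])
    · calc (∫⁻ s in Ioi (1:ℝ), G s)
          ≤ ∫⁻ s in Ioi (1:ℝ), ENNReal.ofReal 8 * ENNReal.ofReal (s ^ (-(Q/h))) := by
            apply lintegral_mono_ae
            filter_upwards [ae_restrict_mem measurableSet_Ioi] with s hs
            exact hGupper s (lt_trans zero_lt_one hs)
        _ = ENNReal.ofReal 8 * ∫⁻ s in Ioi (1:ℝ), ENNReal.ofReal (s ^ (-(Q/h))) :=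
            lintegral_const_mul _ (by fun_prop)
        _ < ⊤ := ENNReal.mul_lt_top (by simp) ((aux_lintegral_Ioi_rpow zero_lt_one).2 hexp)
end

section
/- For any δ > 0 and h > 0, the Lebesgue integral ∫_{{t∈ℝ³ : |t| > δ}} ρ(t)^{−h} dt is finite if and only if Q < h. -/
/-!
By the layer-cake formula, `∫_S ρ^(-h) = ∫_0^∞ |S ∩ {ρ < s^(-1/h)}| ds`. The anisotropic
dilations `t ↦ (l^(1/q1) t1, l^(1/q2) t2, l^(1/q3) t3)` multiply `ρ` by `l` and have Jacobian
`l^Q`, so `|{ρ < l}| = l^Q |{ρ < 1}|` with `0 < |{ρ < 1}| < ∞`. On `S = {|t| > δ}` the gauge `ρ`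
is bounded below and `Sᶜ` is bounded, hence the distribution function vanishes for large `s` and
differs from `|{ρ < 1}| s^(-Q/h)` by at most `|Sᶜ|` near `0`. So the integral is finite iff
`∫_0^1 s^(-Q/h) ds` is, i.e. iff `Q < h`.
-/

open MeasureTheory Set
open scoped ENNReal

lemma lintegral_Ioo_rpow_ne_top_iff {p M : ℝ} (hM : 0 < M) :
    ∫⁻ s in Ioo 0 M, ENNReal.ofReal (s ^ p) ≠ ∞ ↔ -1 < p := by
  have hnonneg : 0 ≤ᵐ[volume.restrict (Ioo 0 M)] fun s : ℝ ↦ s ^ p :=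
    ae_restrict_of_forall_mem measurableSet_Ioo fun s hs ↦ Real.rpow_nonneg hs.1.le p
  rw [lintegral_ofReal_ne_top_iff_integrable (by fun_prop) hnonneg]
  exact intervalIntegral.integrableOn_Ioo_rpow_iff hM

lemma rpow_neg_inv_rpow {s : ℝ} (hs : 0 ≤ s) (Q h : ℝ) : (s ^ (-h⁻¹)) ^ Q = s ^ (-(Q / h)) := by
  rw [← Real.rpow_mul hs]
  ring_nf

section LayerCake

variable {X : Type*} [MeasurableSpace X] {μ : Measure X} {ρ : X → ℝ} {S : Set X} {c : ℝ≥0∞}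
  {Q h : ℝ}

lemma setLIntegral_rpow_neg_eq (hρ : Measurable ρ) (hS : MeasurableSet S)
    (hSρ : ∀ x ∈ S, 0 < ρ x) (hh : 0 < h) :
    ∫⁻ x in S, ENNReal.ofReal (ρ x ^ (-h)) ∂μ
      = ∫⁻ s in Ioi 0, μ ({x | ρ x < s ^ (-h⁻¹)} ∩ S) := by
  rw [lintegral_eq_lintegral_meas_lt _
    (ae_restrict_of_forall_mem hS fun x hx ↦ Real.rpow_nonneg (hSρ x hx).le _)
    (by fun_prop)]
  refine setLIntegral_congr_fun measurableSet_Ioi fun s (hs : 0 < s) ↦ ?_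
  rw [Measure.restrict_apply (measurableSet_lt measurable_const (by fun_prop))]
  congr 1
  ext x
  refine and_congr_left fun hx ↦ ?_
  have hs' : (s ^ (-h⁻¹)) ^ (-h) = s := by
    rw [← Real.rpow_mul hs.le, neg_mul_neg, inv_mul_cancel₀ hh.ne', Real.rpow_one]
  conv_lhs => rw [← hs']
  exact Real.rpow_lt_rpow_iff_of_neg (Real.rpow_pos_of_pos hs _) (hSρ x hx) (neg_neg_of_pos hh)

lemma setLIntegral_rpow_neg_lt_top_of_lt (hρ : Measurable ρ) (hS : MeasurableSet S)
    (hscale : ∀ l, 0 < l → μ {x | ρ x < l} = ENNReal.ofReal (l ^ Q) * c) (hc : c ≠ ∞)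
    {r : ℝ} (hr : 0 < r) (hSr : ∀ x ∈ S, r ≤ ρ x) (hh : 0 < h) (hQh : Q < h) :
    ∫⁻ x in S, ENNReal.ofReal (ρ x ^ (-h)) ∂μ < ∞ := by
  rw [setLIntegral_rpow_neg_eq hρ hS (fun x hx ↦ hr.trans_le (hSr x hx)) hh]
  set M := r ^ (-h)
  have hM : 0 < M := Real.rpow_pos_of_pos hr _
  have hbound : ∀ s ∈ Ioi (0 : ℝ), μ ({x | ρ x < s ^ (-h⁻¹)} ∩ S)
      ≤ (Ioo 0 M).indicator (fun s ↦ ENNReal.ofReal (s ^ (-(Q / h))) * c) s := by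
    intro s (hs : 0 < s)
    by_cases hsM : s < M
    · rw [indicator_of_mem (show s ∈ Ioo 0 M from ⟨hs, hsM⟩), ← rpow_neg_inv_rpow hs.le,
        ← hscale _ (Real.rpow_pos_of_pos hs _)]
      exact measure_mono inter_subset_left
    · -- `ρ ≥ r` on `S`, while `s ≥ r^(-h)` forces `ρ < s^(-1/h) ≤ r`
      have hempty : {x | ρ x < s ^ (-h⁻¹)} ∩ S = ∅ := by
        refine eq_empty_of_forall_notMem fun x hx ↦ (hSr x hx.2).not_gt ?_
        calc ρ x < s ^ (-h⁻¹) := hx.1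
          _ ≤ M ^ (-h⁻¹) :=
            Real.rpow_le_rpow_of_nonpos hM (not_lt.1 hsM) (neg_nonpos.2 (inv_nonneg.2 hh.le))
          _ = r := by rw [← inv_neg, Real.rpow_rpow_inv hr.le (neg_ne_zero.2 hh.ne')]
      simp [hempty]
  have hp : -1 < -(Q / h) := neg_lt_neg ((div_lt_one hh).2 hQh)
  calc _ ≤ ∫⁻ s in Ioi 0, (Ioo 0 M).indicator (fun s ↦ ENNReal.ofReal (s ^ (-(Q / h))) * c) s :=
        setLIntegral_mono ((by fun_prop : Measurable _).indicator measurableSet_Ioo) hbound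
    _ ≤ ∫⁻ s, (Ioo 0 M).indicator (fun s ↦ ENNReal.ofReal (s ^ (-(Q / h))) * c) s :=
        setLIntegral_le_lintegral _ _
    _ = (∫⁻ s in Ioo 0 M, ENNReal.ofReal (s ^ (-(Q / h)))) * c := by
        rw [lintegral_indicator measurableSet_Ioo, lintegral_mul_const _ (by fun_prop)]
    _ < ∞ := ENNReal.mul_lt_top ((lintegral_Ioo_rpow_ne_top_iff hM).2 hp).lt_top hc.lt_top

lemma lt_of_setLIntegral_rpow_neg_lt_top (hρ : Measurable ρ) (hS : MeasurableSet S)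
    (hSρ : ∀ x ∈ S, 0 < ρ x) (hscale : ∀ l, 0 < l → μ {x | ρ x < l} = ENNReal.ofReal (l ^ Q) * c)
    (hc : c ≠ 0) (hSc : μ Sᶜ ≠ ∞) (hh : 0 < h)
    (hfin : ∫⁻ x in S, ENNReal.ofReal (ρ x ^ (-h)) ∂μ < ∞) : Q < h := by
  rw [setLIntegral_rpow_neg_eq hρ hS hSρ hh] at hfin
  have hbound : ∀ s ∈ Ioo (0 : ℝ) 1,
      ENNReal.ofReal (s ^ (-(Q / h))) * c ≤ μ ({x | ρ x < s ^ (-h⁻¹)} ∩ S) + μ Sᶜ := by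
    intro s hs
    rw [← rpow_neg_inv_rpow hs.1.le, ← hscale _ (Real.rpow_pos_of_pos hs.1 _)]
    exact (measure_le_inter_add_sdiff _ _ S).trans
      (add_le_add_right (measure_mono (sdiff_subset_compl _ _)) _)
  have hint : (∫⁻ s in Ioo 0 1, ENNReal.ofReal (s ^ (-(Q / h)))) * c ≠ ∞ := by
    rw [← lintegral_mul_const _ (by fun_prop)]
    refine ne_top_of_le_ne_top ?_ (setLIntegral_mono' measurableSet_Ioo hbound)
    rw [lintegral_add_right _ measurable_const, setLIntegral_const, Real.volume_Ioo, sub_zero,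
      ENNReal.ofReal_one, mul_one]
    exact ENNReal.add_ne_top.2
      ⟨ne_top_of_le_ne_top hfin.ne (lintegral_mono_set Ioo_subset_Ioi_self), hSc⟩
  have hp : -1 < -(Q / h) :=
    (lintegral_Ioo_rpow_ne_top_iff one_pos).1 fun htop ↦ hint (by rw [htop, ENNReal.top_mul hc])
  exact (div_lt_one hh).1 (neg_lt_neg_iff.1 hp)

lemma setLIntegral_rpow_neg_lt_top_iff (hρ : Measurable ρ) (hS : MeasurableSet S)
    (hscale : ∀ l, 0 < l → μ {x | ρ x < l} = ENNReal.ofReal (l ^ Q) * c) (hc0 : c ≠ 0)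
    (hc : c ≠ ∞) {r : ℝ} (hr : 0 < r) (hSr : ∀ x ∈ S, r ≤ ρ x) (hSc : μ Sᶜ ≠ ∞) (hh : 0 < h) :
    ∫⁻ x in S, ENNReal.ofReal (ρ x ^ (-h)) ∂μ < ∞ ↔ Q < h :=
  ⟨lt_of_setLIntegral_rpow_neg_lt_top hρ hS (fun x hx ↦ hr.trans_le (hSr x hx)) hscale hc0 hSc hh,
    setLIntegral_rpow_neg_lt_top_of_lt hρ hS hscale hc hr hSr hh⟩

end LayerCake

lemma norm_eq_max_max_abs (t : ℝ × ℝ × ℝ) : ‖t‖ = max (max |t.1| |t.2.1|) |t.2.2| := by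
  simp [Prod.norm_def, max_assoc]

noncomputable section

def anisoGauge (q1 q2 q3 : ℝ) (t : ℝ × ℝ × ℝ) : ℝ := |t.1| ^ q1 + |t.2.1| ^ q2 + |t.2.2| ^ q3

def anisoDilation (q1 q2 q3 l : ℝ) : (ℝ × ℝ × ℝ) →ₗ[ℝ] ℝ × ℝ × ℝ :=
  (l ^ (1 / q1) • LinearMap.id).prodMap
    ((l ^ (1 / q2) • LinearMap.id).prodMap (l ^ (1 / q3) • LinearMap.id))

section AnisoGauge

variable {q1 q2 q3 : ℝ}

lemma measurable_anisoGauge : Measurable (anisoGauge q1 q2 q3) := by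
  unfold anisoGauge
  fun_prop

lemma continuous_anisoGauge (hq1 : 0 < q1) (hq2 : 0 < q2) (hq3 : 0 < q3) :
    Continuous (anisoGauge q1 q2 q3) := by
  unfold anisoGauge
  refine .add (.add ?_ ?_) ?_ <;> exact .rpow_const (by fun_prop) fun _ ↦ Or.inr (by positivity)

lemma det_anisoDilation {l : ℝ} (hl : 0 < l) :
    LinearMap.det (anisoDilation q1 q2 q3 l) = l ^ (1 / q1 + 1 / q2 + 1 / q3) := by
  simp [anisoDilation, LinearMap.det_prodMap, Real.rpow_add hl, mul_assoc]

lemma abs_rpow_one_div_mul_rpow {l q : ℝ} (hl : 0 ≤ l) (hq : q ≠ 0) (x : ℝ) :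
    |l ^ (1 / q) * x| ^ q = l * |x| ^ q := by
  rw [abs_mul, abs_of_nonneg (Real.rpow_nonneg hl _),
    Real.mul_rpow (Real.rpow_nonneg hl _) (abs_nonneg x), ← Real.rpow_mul hl,
    one_div_mul_cancel hq, Real.rpow_one]

lemma anisoGauge_anisoDilation (hq1 : q1 ≠ 0) (hq2 : q2 ≠ 0) (hq3 : q3 ≠ 0) {l : ℝ} (hl : 0 ≤ l)
    (t : ℝ × ℝ × ℝ) :
    anisoGauge q1 q2 q3 (anisoDilation q1 q2 q3 l t) = l * anisoGauge q1 q2 q3 t := by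
  simp only [anisoGauge, anisoDilation, LinearMap.prodMap_apply, LinearMap.smul_apply,
    LinearMap.id_apply, smul_eq_mul, abs_rpow_one_div_mul_rpow hl hq1,
    abs_rpow_one_div_mul_rpow hl hq2, abs_rpow_one_div_mul_rpow hl hq3]
  ring

lemma volume_anisoGauge_lt (hq1 : q1 ≠ 0) (hq2 : q2 ≠ 0) (hq3 : q3 ≠ 0) {l : ℝ} (hl : 0 < l) :
    volume {t | anisoGauge q1 q2 q3 t < l}
      = ENNReal.ofReal (l ^ (1 / q1 + 1 / q2 + 1 / q3))
        * volume {t | anisoGauge q1 q2 q3 t < 1} := by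
  have : (volume : Measure (ℝ × ℝ × ℝ)).IsAddHaarMeasure := Measure.prod.instIsAddHaarMeasure _ _
  have hdet := det_anisoDilation (q1 := q1) (q2 := q2) (q3 := q3) hl
  have hpos : 0 < l ^ (1 / q1 + 1 / q2 + 1 / q3) := Real.rpow_pos_of_pos hl _
  have hpre : anisoDilation q1 q2 q3 l ⁻¹' {t | anisoGauge q1 q2 q3 t < l}
      = {t | anisoGauge q1 q2 q3 t < 1} := by
    ext t
    simp [anisoGauge_anisoDilation hq1 hq2 hq3 hl.le, mul_lt_iff_lt_one_right hl]
  rw [← hpre, Measure.addHaar_preimage_linearMap _ (hdet ▸ hpos.ne'), hdet,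
    abs_of_pos (inv_pos.2 hpos), ← mul_assoc, ← ENNReal.ofReal_mul hpos.le,
    mul_inv_cancel₀ hpos.ne', ENNReal.ofReal_one, one_mul]

lemma volume_anisoGauge_lt_one_ne_zero (hq1 : 0 < q1) (hq2 : 0 < q2) (hq3 : 0 < q3) :
    volume {t | anisoGauge q1 q2 q3 t < 1} ≠ 0 :=
  (isOpen_lt (continuous_anisoGauge hq1 hq2 hq3) continuous_const).measure_ne_zero _
    ⟨0, by
      simp [anisoGauge, Real.zero_rpow hq1.ne', Real.zero_rpow hq2.ne', Real.zero_rpow hq3.ne']⟩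

lemma volume_anisoGauge_lt_one_ne_top (hq1 : 0 < q1) (hq2 : 0 < q2) (hq3 : 0 < q3) :
    volume {t | anisoGauge q1 q2 q3 t < 1} ≠ ∞ := by
  refine ne_top_of_le_ne_top (measure_ball_lt_top (x := 0) (r := 1)).ne
    (measure_mono fun t ht ↦ ?_)
  have abs_lt_one {x q : ℝ} (hq : 0 < q) (hx : |x| ^ q < 1) : |x| < 1 :=
    lt_of_not_ge fun h1 ↦ (Real.one_le_rpow h1 hq.le).not_gt hx
  have h1 := Real.rpow_nonneg (abs_nonneg t.1) q1
  have h2 := Real.rpow_nonneg (abs_nonneg t.2.1) q2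
  have h3 := Real.rpow_nonneg (abs_nonneg t.2.2) q3
  simp only [anisoGauge, mem_ofPred_eq] at ht
  rw [mem_ball_zero_iff, norm_eq_max_max_abs]
  exact max_lt (max_lt (abs_lt_one hq1 (by linarith)) (abs_lt_one hq2 (by linarith)))
    (abs_lt_one hq3 (by linarith))

lemma min_rpow_le_anisoGauge {δ : ℝ} (hδ : 0 ≤ δ) (hq1 : 0 ≤ q1) (hq2 : 0 ≤ q2) (hq3 : 0 ≤ q3)
    {t : ℝ × ℝ × ℝ} (ht : δ < ‖t‖) :
    min (δ ^ q1) (min (δ ^ q2) (δ ^ q3)) ≤ anisoGauge q1 q2 q3 t := by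
  have h1 := Real.rpow_nonneg (abs_nonneg t.1) q1
  have h2 := Real.rpow_nonneg (abs_nonneg t.2.1) q2
  have h3 := Real.rpow_nonneg (abs_nonneg t.2.2) q3
  have hmin1 : min (δ ^ q1) (min (δ ^ q2) (δ ^ q3)) ≤ δ ^ q1 := min_le_left _ _
  have hmin2 : min (δ ^ q1) (min (δ ^ q2) (δ ^ q3)) ≤ δ ^ q2 :=
    (min_le_right _ _).trans (min_le_left _ _)
  have hmin3 : min (δ ^ q1) (min (δ ^ q2) (δ ^ q3)) ≤ δ ^ q3 :=
    (min_le_right _ _).trans (min_le_right _ _)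
  rw [norm_eq_max_max_abs, lt_max_iff, lt_max_iff] at ht
  unfold anisoGauge
  rcases ht with (ht | ht) | ht
  · linarith [Real.rpow_le_rpow hδ ht.le hq1]
  · linarith [Real.rpow_le_rpow hδ ht.le hq2]
  · linarith [Real.rpow_le_rpow hδ ht.le hq3]

end AnisoGauge

theorem stmt_4 (q1 q2 q3 : ℝ) (hq1 : 0 < q1) (hq2 : 0 < q2) (hq3 : 0 < q3)
    (δ h : ℝ) (hδ : 0 < δ) (hh : 0 < h) :
    (∫⁻ t in {t : ℝ × ℝ × ℝ | max (max |t.1| |t.2.1|) |t.2.2| > δ},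
        ENNReal.ofReal ((|t.1| ^ q1 + |t.2.1| ^ q2 + |t.2.2| ^ q3) ^ (-h))) < ⊤ ↔
      1 / q1 + 1 / q2 + 1 / q3 < h := by
  have hS : {t : ℝ × ℝ × ℝ | max (max |t.1| |t.2.1|) |t.2.2| > δ} = {t | δ < ‖t‖} := by
    simp [norm_eq_max_max_abs]
  have hSc : volume {t : ℝ × ℝ × ℝ | δ < ‖t‖}ᶜ ≠ ∞ := by
    have hball : {t : ℝ × ℝ × ℝ | δ < ‖t‖}ᶜ = Metric.closedBall 0 δ := by
      ext t
      simp
    exact hball ▸ measure_closedBall_lt_top.ne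
  rw [hS]
  exact setLIntegral_rpow_neg_lt_top_iff measurable_anisoGauge
    (measurableSet_lt measurable_const measurable_norm)
    (fun l hl ↦ volume_anisoGauge_lt hq1.ne' hq2.ne' hq3.ne' hl)
    (volume_anisoGauge_lt_one_ne_zero hq1 hq2 hq3) (volume_anisoGauge_lt_one_ne_top hq1 hq2 hq3)
    (by positivity) (fun t ht ↦ min_rpow_le_anisoGauge hδ.le hq1.le hq2.le hq3.le ht) hSc hh
end
end

section
/- There exists K > 0 such that for all s1, s2 ∈ ℝ³ with |s1| > K, |s2| > K and |s1 − s2| ≤ 1 one has ρ(s1)/2 < ρ(s2) < 2·ρ(s1). -/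
open Real

lemma base_pos (q : ℝ) (hq : 0 < q) : 0 < ((3/2:ℝ) ^ q⁻¹ - 1)⁻¹ + 1 := by
  have hr1 : 1 < (3/2:ℝ) ^ q⁻¹ :=
    (Real.one_lt_rpow_iff_of_pos (by norm_num)).mpr (Or.inl ⟨by norm_num, by positivity⟩)
  have : 0 < ((3/2:ℝ) ^ q⁻¹ - 1)⁻¹ := inv_pos.mpr (by linarith)
  linarith

lemma key_bound (q : ℝ) (hq : 0 < q) (a b : ℝ) (ha : 0 ≤ a) (hb : 0 ≤ b)
    (hab : a ≤ b + 1) :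
    a ^ q ≤ 3/2 * b ^ q + (((3/2:ℝ) ^ q⁻¹ - 1)⁻¹ + 1) ^ q := by
  set r : ℝ := (3/2:ℝ) ^ q⁻¹ with hr
  have hr1 : 1 < r :=
    (Real.one_lt_rpow_iff_of_pos (by norm_num)).mpr (Or.inl ⟨by norm_num, by positivity⟩)
  set T : ℝ := (r - 1)⁻¹ with hT
  have hT0 : 0 < T := inv_pos.mpr (by linarith)
  have hbq : 0 ≤ b ^ q := Real.rpow_nonneg hb q
  have hCq : 0 ≤ (T + 1) ^ q := Real.rpow_nonneg (by linarith) q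
  rcases le_or_gt b T with hbT | hbT
  · have : a ^ q ≤ (T + 1) ^ q := Real.rpow_le_rpow ha (by linarith) hq.le
    linarith
  · have h1 : a ^ q ≤ (b + 1) ^ q := Real.rpow_le_rpow ha hab hq.le
    have hTr : T * (r - 1) = 1 := inv_mul_cancel₀ (by linarith)
    have h2 : b + 1 ≤ b * r := by nlinarith
    have h3 : (b + 1) ^ q ≤ (b * r) ^ q :=
      Real.rpow_le_rpow (by linarith) h2 hq.le
    have h4 : (b * r) ^ q = b ^ q * (3/2) := by
      rw [Real.mul_rpow hb (by positivity), hr,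
        Real.rpow_inv_rpow (by norm_num) hq.ne']
    linarith

theorem stmt_5 (q1 q2 q3 : ℝ) (hq1 : 0 < q1) (hq2 : 0 < q2) (hq3 : 0 < q3) :
    ∃ K : ℝ, 0 < K ∧ ∀ s1 s2 : ℝ × ℝ × ℝ,
      K < max (max |s1.1| |s1.2.1|) |s1.2.2| →
      K < max (max |s2.1| |s2.2.1|) |s2.2.2| →
      max (max |s1.1 - s2.1| |s1.2.1 - s2.2.1|) |s1.2.2 - s2.2.2| ≤ 1 →
      (|s1.1| ^ q1 + |s1.2.1| ^ q2 + |s1.2.2| ^ q3) / 2 <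
        |s2.1| ^ q1 + |s2.2.1| ^ q2 + |s2.2.2| ^ q3 ∧
      |s2.1| ^ q1 + |s2.2.1| ^ q2 + |s2.2.2| ^ q3 <
        2 * (|s1.1| ^ q1 + |s1.2.1| ^ q2 + |s1.2.2| ^ q3) := by
  set C1 : ℝ := (((3/2:ℝ) ^ q1⁻¹ - 1)⁻¹ + 1) ^ q1 with hC1
  set C2 : ℝ := (((3/2:ℝ) ^ q2⁻¹ - 1)⁻¹ + 1) ^ q2 with hC2
  set C3 : ℝ := (((3/2:ℝ) ^ q3⁻¹ - 1)⁻¹ + 1) ^ q3 with hC3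
  have hC1p : 0 ≤ C1 := Real.rpow_nonneg (base_pos q1 hq1).le q1
  have hC2p : 0 ≤ C2 := Real.rpow_nonneg (base_pos q2 hq2).le q2
  have hC3p : 0 ≤ C3 := Real.rpow_nonneg (base_pos q3 hq3).le q3
  set C : ℝ := C1 + C2 + C3 with hCdef
  have hCp : 0 ≤ C := by positivity
  set K : ℝ := max 1 (max (max ((2*C+1) ^ q1⁻¹) ((2*C+1) ^ q2⁻¹)) ((2*C+1) ^ q3⁻¹))
    with hK
  have hK1 : (1:ℝ) ≤ K := le_max_left _ _
  have hKq1 : (2*C+1) ^ q1⁻¹ ≤ K := le_trans (le_trans (le_max_left _ _) (le_max_left _ _)) (le_max_right _ _)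
  have hKq2 : (2*C+1) ^ q2⁻¹ ≤ K := le_trans (le_trans (le_max_right _ _) (le_max_left _ _)) (le_max_right _ _)
  have hKq3 : (2*C+1) ^ q3⁻¹ ≤ K := le_trans (le_max_right _ _) (le_max_right _ _)
  have hbig : ∀ (x q : ℝ), 0 < q → (2*C+1) ^ q⁻¹ ≤ K → K < |x| → 2*C + 1 ≤ |x| ^ q := by
    intro x q hq hKq hx
    have h1 : ((2*C+1) ^ q⁻¹) ^ q ≤ |x| ^ q :=
      Real.rpow_le_rpow (Real.rpow_nonneg (by linarith) _) (le_trans hKq hx.le) hq.le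
    rwa [Real.rpow_inv_rpow (by linarith) hq.ne'] at h1
  refine ⟨K, by linarith, ?_⟩
  intro s1 s2 h1 h2 hd
  obtain ⟨x1, y1, z1⟩ := s1
  obtain ⟨x2, y2, z2⟩ := s2
  simp only at h1 h2 hd ⊢
  have hdx : |x1 - x2| ≤ 1 := le_trans (le_trans (le_max_left _ _) (le_max_left _ _)) hd
  have hdy : |y1 - y2| ≤ 1 := le_trans (le_trans (le_max_right _ _) (le_max_left _ _)) hd
  have hdz : |z1 - z2| ≤ 1 := le_trans (le_max_right _ _) hd
  have hx12 : |x1| ≤ |x2| + 1 := by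
    have := abs_sub_abs_le_abs_sub x1 x2; linarith
  have hx21 : |x2| ≤ |x1| + 1 := by
    have := abs_sub_abs_le_abs_sub x2 x1; rw [abs_sub_comm] at this; linarith
  have hy12 : |y1| ≤ |y2| + 1 := by
    have := abs_sub_abs_le_abs_sub y1 y2; linarith
  have hy21 : |y2| ≤ |y1| + 1 := by
    have := abs_sub_abs_le_abs_sub y2 y1; rw [abs_sub_comm] at this; linarith
  have hz12 : |z1| ≤ |z2| + 1 := by
    have := abs_sub_abs_le_abs_sub z1 z2; linarith
  have hz21 : |z2| ≤ |z1| + 1 := by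
    have := abs_sub_abs_le_abs_sub z2 z1; rw [abs_sub_comm] at this; linarith
  have kx12 := key_bound q1 hq1 _ _ (abs_nonneg x1) (abs_nonneg x2) hx12
  have kx21 := key_bound q1 hq1 _ _ (abs_nonneg x2) (abs_nonneg x1) hx21
  have ky12 := key_bound q2 hq2 _ _ (abs_nonneg y1) (abs_nonneg y2) hy12
  have ky21 := key_bound q2 hq2 _ _ (abs_nonneg y2) (abs_nonneg y1) hy21
  have kz12 := key_bound q3 hq3 _ _ (abs_nonneg z1) (abs_nonneg z2) hz12
  have kz21 := key_bound q3 hq3 _ _ (abs_nonneg z2) (abs_nonneg z1) hz21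
  have hnn : ∀ (x q : ℝ), 0 ≤ |x| ^ q := fun x q => Real.rpow_nonneg (abs_nonneg x) q
  have hrho1 : 2*C + 1 ≤ |x1| ^ q1 + |y1| ^ q2 + |z1| ^ q3 := by
    rcases max_cases (max |x1| |y1|) |z1| with ⟨he, _⟩ | ⟨he, _⟩
    · rw [he] at h1
      rcases max_cases |x1| |y1| with ⟨he2, _⟩ | ⟨he2, _⟩
      · rw [he2] at h1
        have := hbig x1 q1 hq1 hKq1 h1
        have := hnn y1 q2; have := hnn z1 q3; linarith
      · rw [he2] at h1
        have := hbig y1 q2 hq2 hKq2 h1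
        have := hnn x1 q1; have := hnn z1 q3; linarith
    · rw [he] at h1
      have := hbig z1 q3 hq3 hKq3 h1
      have := hnn x1 q1; have := hnn y1 q2; linarith
  have hrho2 : 2*C + 1 ≤ |x2| ^ q1 + |y2| ^ q2 + |z2| ^ q3 := by
    rcases max_cases (max |x2| |y2|) |z2| with ⟨he, _⟩ | ⟨he, _⟩
    · rw [he] at h2
      rcases max_cases |x2| |y2| with ⟨he2, _⟩ | ⟨he2, _⟩
      · rw [he2] at h2
        have := hbig x2 q1 hq1 hKq1 h2
        have := hnn y2 q2; have := hnn z2 q3; linarith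
      · rw [he2] at h2
        have := hbig y2 q2 hq2 hKq2 h2
        have := hnn x2 q1; have := hnn z2 q3; linarith
    · rw [he] at h2
      have := hbig z2 q3 hq3 hKq3 h2
      have := hnn x2 q1; have := hnn y2 q2; linarith
  constructor
  · linarith
  · linarith
end

section
/- Assume additionally 1/(2q1) + 1/(2q2) + 1/q3 < 1 < 1/(2q1) + 1/q2 + 1/q3 (Region II). Then Σ_{(t2,t3)∈ℤ²} |r(0,t2,t3)| = ∞ while Σ_{t3∈ℤ} |r(0,0,t3)| < ∞. -/
/-
The coefficients obey |a(s)| ≲ ∏ᵢ |sᵢ|₊^(-αᵢ) for any αᵢ ≥ 0 with Σ αᵢ/qᵢ = 1, by weighted AM–GM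
applied to the denominator. The lower inequality of Region II leaves room for α₁, α₂ > 1/2 and
α₃ > 1, so a ∈ ℓ² and Σ_{t₃} Σ_s |a(s) a(s + t₃e₃)| < ∞, which gives the second claim.

For the first, test r against a box: if a ≥ ε on U + ({0} × T), then
#U · #T · ε² ≤ Σ_u (Σ_{t∈T} a(u + (0,t)))² = Σ_{t,t'∈T} r(0, t' - t)
  ≤ #T · Σ_{(t₂,t₃)} |r(0,t₂,t₃)|.
Since g → 1, far out in the first coordinate a ≳ λ⁻¹ on boxes of sides ≈ λ^(1/qᵢ), and the left side
then grows like λ^(1/q₁ + 2/q₂ + 2/q₃ - 2), a positive power by the upper inequality of Region II.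
-/

open Filter

section Autocorrelation

variable {G : Type*} [AddCommGroup G]

noncomputable def autocorr (a : G → ℝ) (t : G) : ℝ := ∑' s, a s * a (t + s)

lemma summable_mul_translate {a : G → ℝ} (ha : Summable fun s => a s ^ 2) (t : G) :
    Summable fun s => a s * a (t + s) := by
  have hat : Summable fun s => a (t + s) ^ 2 :=
    (Equiv.addLeft t).summable_iff (f := fun s => a s ^ 2) |>.mpr ha
  refine Summable.of_norm_bounded ((ha.add hat).div_const 2) fun s => ?_
  rw [Real.norm_eq_abs, abs_mul, ← sq_abs (a s), ← sq_abs (a (t + s))]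
  linarith [two_mul_le_add_sq |a s| |a (t + s)|]

lemma hasSum_mul_translate {a : G → ℝ} (ha : Summable fun s => a s ^ 2) (v w : G) :
    HasSum (fun u => a (u + v) * a (u + w)) (autocorr a (w - v)) := by
  have h : HasSum ((fun s => a s * a (w - v + s)) ∘ Equiv.addRight v) (autocorr a (w - v)) :=
    (Equiv.addRight v).hasSum_iff.mpr (summable_mul_translate ha (w - v)).hasSum
  convert h using 2 with u
  simp only [Function.comp_apply, Equiv.coe_addRight]
  abel_nf

lemma hasSum_sq_sum_translate {H : Type*} {a : G → ℝ} (ha : Summable fun s => a s ^ 2)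
    (φ : H → G) (T : Finset H) :
    HasSum (fun u => (∑ t ∈ T, a (u + φ t)) ^ 2)
      (∑ t ∈ T, ∑ t' ∈ T, autocorr a (φ t' - φ t)) := by
  simp_rw [sq, Finset.sum_mul_sum]
  exact hasSum_sum fun t _ => hasSum_sum fun t' _ => hasSum_mul_translate ha _ _

lemma sum_sum_autocorr_le {H : Type*} [AddCommGroup H] (a : G → ℝ) (φ : H →+ G)
    (hS : Summable fun τ => |autocorr a (φ τ)|) (T : Finset H) :
    ∑ t ∈ T, ∑ t' ∈ T, autocorr a (φ t' - φ t) ≤ T.card * ∑' τ, |autocorr a (φ τ)| := by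
  rw [← nsmul_eq_mul, ← Finset.sum_const]
  refine Finset.sum_le_sum fun t _ => ?_
  calc ∑ t' ∈ T, autocorr a (φ t' - φ t)
      ≤ ∑ t' ∈ T, |autocorr a (φ (t' - t))| :=
        Finset.sum_le_sum fun t' _ => (map_sub φ t' t).symm ▸ le_abs_self _
    _ ≤ ∑' t', |autocorr a (φ (t' - t))| :=
        Summable.sum_le_tsum T (fun _ _ => abs_nonneg _)
          ((Equiv.subRight t).summable_iff (f := fun τ => |autocorr a (φ τ)|) |>.mpr hS)
    _ = ∑' τ, |autocorr a (φ τ)| := (Equiv.subRight t).tsum_eq (fun τ => |autocorr a (φ τ)|)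

lemma card_mul_card_mul_sq_le_tsum_abs_autocorr {H : Type*} [AddCommGroup H] {a : G → ℝ}
    (ha : Summable fun s => a s ^ 2) (φ : H →+ G) (hS : Summable fun τ => |autocorr a (φ τ)|)
    {U : Finset G} {T : Finset H} {ε : ℝ} (hε : 0 ≤ ε)
    (hlow : ∀ u ∈ U, ∀ t ∈ T, ε ≤ a (u + φ t)) :
    U.card * T.card * ε ^ 2 ≤ ∑' τ, |autocorr a (φ τ)| := by
  have hsq := hasSum_sq_sum_translate ha φ T
  have hU : U.card * (T.card * ε) ^ 2 ≤ T.card * ∑' τ, |autocorr a (φ τ)| := by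
    calc U.card * (T.card * ε) ^ 2 ≤ ∑ u ∈ U, (∑ t ∈ T, a (u + φ t)) ^ 2 := by
          rw [← nsmul_eq_mul, ← Finset.sum_const]
          refine Finset.sum_le_sum fun u hu => pow_le_pow_left₀ (by positivity) ?_ 2
          simpa using Finset.card_nsmul_le_sum T _ ε (hlow u hu)
      _ ≤ ∑ t ∈ T, ∑ t' ∈ T, autocorr a (φ t' - φ t) :=
          hsq.tsum_eq ▸ hsq.summable.sum_le_tsum U (fun _ _ => sq_nonneg _)
      _ ≤ T.card * ∑' τ, |autocorr a (φ τ)| := sum_sum_autocorr_le a φ hS T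
  rcases T.eq_empty_or_nonempty with rfl | hT
  · simpa using tsum_nonneg fun τ => abs_nonneg (autocorr a (φ τ))
  · have hT0 : (0 : ℝ) < T.card := by exact_mod_cast hT.card_pos
    nlinarith

lemma summable_abs_autocorr_of_summable {H : Type*} (a : G → ℝ) (φ : H → G)
    (h : Summable fun p : H × G => |a p.2 * a (φ p.1 + p.2)|) :
    Summable fun t => |autocorr a (φ t)| := by
  obtain ⟨hfib, hsum⟩ := (summable_prod_of_nonneg fun _ => abs_nonneg _).1 h
  refine hsum.of_nonneg_of_le (fun _ => abs_nonneg _) fun t => ?_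
  have hfib' : Summable fun s => ‖a s * a (φ t + s)‖ := hfib t
  exact norm_tsum_le_tsum_norm hfib'

end Autocorrelation

lemma summable_sq_of_abs_le_mul {A B C : Type*} {a : A × B × C → ℝ} {f : A → ℝ} {g : B → ℝ}
    {h : C → ℝ} (hf : Summable fun x => f x ^ 2) (hg : Summable fun y => g y ^ 2)
    (hh : Summable fun z => h z ^ 2) (ha : ∀ s, |a s| ≤ f s.1 * g s.2.1 * h s.2.2) :
    Summable fun s => a s ^ 2 := by
  have hprod : Summable fun s : A × B × C => f s.1 ^ 2 * (g s.2.1 ^ 2 * h s.2.2 ^ 2) :=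
    hf.mul_of_nonneg (hg.mul_of_nonneg hh (fun _ => sq_nonneg _) fun _ => sq_nonneg _)
      (fun _ => sq_nonneg _) fun _ => mul_nonneg (sq_nonneg _) (sq_nonneg _)
  refine hprod.of_nonneg_of_le (fun _ => sq_nonneg _) fun s => ?_
  calc a s ^ 2 = |a s| ^ 2 := (sq_abs _).symm
    _ ≤ (f s.1 * g s.2.1 * h s.2.2) ^ 2 := pow_le_pow_left₀ (abs_nonneg _) (ha s) 2
    _ = _ := by ring

lemma summable_abs_mul_translate_of_abs_le_mul {A B C : Type*} [AddCommGroup A] [AddCommGroup B]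
    [AddCommGroup C] {a : A × B × C → ℝ} {f : A → ℝ} {g : B → ℝ} {h : C → ℝ}
    (hf : Summable fun x => f x ^ 2) (hg : Summable fun y => g y ^ 2) (hh : Summable h)
    (hh₀ : 0 ≤ h) (ha : ∀ s, |a s| ≤ f s.1 * g s.2.1 * h s.2.2) :
    Summable fun p : C × (A × B × C) => |a p.2 * a ((0, 0, p.1) + p.2)| := by
  have hΦ : Summable fun p : (A × B × C) × C => f p.1.1 ^ 2 * (g p.1.2.1 ^ 2 * h p.1.2.2) * h p.2 :=
    (hf.mul_of_nonneg (hg.mul_of_nonneg hh (fun _ => sq_nonneg _) hh₀) (fun _ => sq_nonneg _)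
      fun _ => mul_nonneg (sq_nonneg _) (hh₀ _)).mul_of_nonneg hh
      (fun _ => mul_nonneg (sq_nonneg _) (mul_nonneg (sq_nonneg _) (hh₀ _))) hh₀
  have hinj : Function.Injective fun p : C × (A × B × C) => (p.2, p.1 + p.2.2.2) := by
    rintro ⟨t, s⟩ ⟨t', s'⟩ h
    simp only [Prod.mk.injEq] at h
    obtain ⟨rfl, h⟩ := h
    simp_all
  refine (hΦ.comp_injective hinj).of_nonneg_of_le (fun _ => abs_nonneg _) ?_
  rintro ⟨t, x, y, z⟩
  have h1 := ha (x, y, z)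
  have h2 := ha (x, y, t + z)
  simp only [Prod.mk_add_mk, zero_add, Function.comp_apply, abs_mul] at h1 h2 ⊢
  calc |a (x, y, z)| * |a (x, y, t + z)| ≤ (f x * g y * h z) * (f x * g y * h (t + z)) :=
        mul_le_mul h1 h2 (abs_nonneg _) ((abs_nonneg _).trans h1)
    _ = _ := by ring

lemma exists_forall_fst_ge_of_eventually_cofinite {β : Type*} {p : ℤ × β → Prop}
    (hp : ∀ᶠ s in cofinite, p s) : ∃ W : ℤ, ∀ s, W ≤ s.1 → p s := by
  obtain ⟨W, hW⟩ := ((Filter.eventually_cofinite.1 hp).image Prod.fst).bddAbove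
  refine ⟨W + 1, fun s hs => by_contra fun h => ?_⟩
  have := hW ⟨s, h, rfl⟩
  omega

lemma geom_mean_le_add3 {w₁ w₂ w₃ p₁ p₂ p₃ : ℝ} (hw₁ : 0 ≤ w₁) (hw₂ : 0 ≤ w₂) (hw₃ : 0 ≤ w₃)
    (hp₁ : 0 ≤ p₁) (hp₂ : 0 ≤ p₂) (hp₃ : 0 ≤ p₃) (hw : w₁ + w₂ + w₃ = 1) :
    p₁ ^ w₁ * p₂ ^ w₂ * p₃ ^ w₃ ≤ p₁ + p₂ + p₃ := by
  refine (Real.geom_mean_le_arith_mean3_weighted hw₁ hw₂ hw₃ hp₁ hp₂ hp₃ hw).trans ?_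
  gcongr <;> refine mul_le_of_le_one_left ‹_› (by linarith)

lemma rpow_le_ceil_mul_div {x : ℝ} (hx : 1 ≤ x) (p1 p2 p3 : ℝ) :
    x ^ (p1 + 2 * p2 + 2 * p3 - 2) ≤ ⌈x ^ p1⌉₊ * (⌈x ^ p2⌉₊ * ⌈x ^ p3⌉₊) ^ 2 / x ^ 2 := by
  have hx0 : 0 < x := one_pos.trans_le hx
  have e : x ^ (p1 + 2 * p2 + 2 * p3 - 2) = x ^ p1 * (x ^ p2 * x ^ p3) ^ 2 / x ^ 2 := by
    rw [← Real.rpow_add hx0, ← Real.rpow_natCast, ← Real.rpow_mul hx0.le,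
      ← Real.rpow_natCast x 2, ← Real.rpow_add hx0, ← Real.rpow_sub hx0]
    ring_nf
  rw [e]
  gcongr <;> exact Nat.le_ceil _

lemma rpow_div_le_of_le_mul_rpow {x K y q ν : ℝ} (hx : 0 ≤ x) (hK : 0 ≤ K) (hy : 0 ≤ y)
    (hq : 0 < q) (hν : 0 < ν) (h : x ≤ K * y ^ (1 / q)) :
    x ^ (q / ν) ≤ K ^ (q / ν) * y ^ (1 / ν) := by
  calc x ^ (q / ν) ≤ (K * y ^ (1 / q)) ^ (q / ν) := by gcongr
    _ = K ^ (q / ν) * y ^ (1 / ν) := by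
      rw [Real.mul_rpow hK (by positivity), ← Real.rpow_mul hy]
      congr 2
      field_simp

noncomputable def absPlus (n : ℤ) : ℝ := max |(n : ℝ)| 1

lemma one_le_absPlus (n : ℤ) : 1 ≤ absPlus n := le_max_right _ _

lemma absPlus_pos (n : ℤ) : 0 < absPlus n := one_pos.trans_le (one_le_absPlus n)

lemma summable_absPlus_rpow_neg {β : ℝ} (hβ : 1 < β) :
    Summable fun n : ℤ => absPlus n ^ (-β) := by
  refine (Real.summable_abs_int_rpow hβ).congr_cofinite ?_
  filter_upwards [(Set.finite_singleton (0 : ℤ)).compl_mem_cofinite] with n hn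
  rw [absPlus, max_eq_left]
  exact_mod_cast Int.one_le_abs hn

lemma summable_absPlus_rpow_neg_sq {α : ℝ} (hα : 1 / 2 < α) :
    Summable fun n : ℤ => (absPlus n ^ (-α)) ^ 2 := by
  refine (summable_absPlus_rpow_neg (β := 2 * α) (by linarith)).congr fun n => ?_
  rw [← Real.rpow_natCast, ← Real.rpow_mul (absPlus_pos n).le]
  ring_nf

lemma absPlus_le_mul {W n : ℤ} {y K : ℝ} (hy : 1 ≤ y) (hK : |(W : ℝ)| + 4 ≤ K)
    (h₁ : W ≤ n) (h₂ : n < W + 2 * ⌈y⌉₊) : absPlus n ≤ K * y := by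
  have hN : (⌈y⌉₊ : ℝ) ≤ 2 * y := Nat.ceil_le_two_mul (by linarith)
  have h₁' : (W : ℝ) ≤ n := by exact_mod_cast h₁
  have h₂' : (n : ℝ) < W + 2 * ⌈y⌉₊ := by exact_mod_cast h₂
  have hKy : (|(W : ℝ)| + 4) * y ≤ K * y := mul_le_mul_of_nonneg_right hK (by linarith)
  have hW : |(W : ℝ)| ≤ |(W : ℝ)| * y := le_mul_of_one_le_right (abs_nonneg _) hy
  refine max_le (abs_le.2 ⟨?_, ?_⟩) ?_ <;>
    linarith [neg_abs_le (W : ℝ), le_abs_self (W : ℝ)]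

lemma exists_decay_exponents {q1 q2 q3 : ℝ} (hq1 : 0 < q1) (hq2 : 0 < q2) (hq3 : 0 < q3)
    (h : 1 / (2 * q1) + 1 / (2 * q2) + 1 / q3 < 1) :
    ∃ α1 α2 α3 : ℝ, 1 / 2 < α1 ∧ 1 / 2 < α2 ∧ 1 < α3 ∧ α1 / q1 + α2 / q2 + α3 / q3 = 1 := by
  set δ := (1 - (1 / (2 * q1) + 1 / (2 * q2) + 1 / q3)) / 3
  have hδ : 0 < δ := by simp only [δ]; linarith
  refine ⟨1 / 2 + q1 * δ, 1 / 2 + q2 * δ, 1 + q3 * δ, by nlinarith, by nlinarith, by nlinarith, ?_⟩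
  simp only [δ]
  field_simp
  ring

section Model

variable {q1 q2 q3 c1 c2 c3 ν : ℝ}

variable (q1 q2 q3 c1 c2 c3 ν) in
noncomputable def anisoBase (s : ℤ × ℤ × ℤ) : ℝ :=
  c1 * absPlus s.1 ^ (q1 / ν) + c2 * absPlus s.2.1 ^ (q2 / ν) + c3 * absPlus s.2.2 ^ (q3 / ν)

lemma anisoBase_pos (hc1 : 0 < c1) (hc2 : 0 < c2) (hc3 : 0 < c3) (s : ℤ × ℤ × ℤ) :
    0 < anisoBase q1 q2 q3 c1 c2 c3 ν s := by
  have := absPlus_pos s.1; have := absPlus_pos s.2.1; have := absPlus_pos s.2.2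
  unfold anisoBase; positivity

lemma rpow_mul_rpow_le_anisoBase_rpow (hq1 : 0 < q1) (hq2 : 0 < q2) (hq3 : 0 < q3)
    (hc1 : 0 < c1) (hc2 : 0 < c2) (hc3 : 0 < c3) (hν : 0 < ν) {α1 α2 α3 : ℝ}
    (hα1 : 0 ≤ α1) (hα2 : 0 ≤ α2) (hα3 : 0 ≤ α3) (hα : α1 / q1 + α2 / q2 + α3 / q3 = 1)
    (s : ℤ × ℤ × ℤ) :
    c1 ^ (α1 / q1 * ν) * c2 ^ (α2 / q2 * ν) * c3 ^ (α3 / q3 * ν) *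
        (absPlus s.1 ^ α1 * absPlus s.2.1 ^ α2 * absPlus s.2.2 ^ α3) ≤
      anisoBase q1 q2 q3 c1 c2 c3 ν s ^ ν := by
  have term : ∀ {c q α : ℝ} (n : ℤ), 0 < c → 0 < q →
      ((c * absPlus n ^ (q / ν)) ^ (α / q)) ^ ν = c ^ (α / q * ν) * absPlus n ^ α := by
    intro c q α n hc hq
    have hn := absPlus_pos n
    rw [← Real.rpow_mul (by positivity), Real.mul_rpow hc.le (by positivity),
      ← Real.rpow_mul hn.le]
    congr 2
    field_simp
  have hθ1 : 0 ≤ α1 / q1 := by positivity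
  have hθ2 : 0 ≤ α2 / q2 := by positivity
  have hθ3 : 0 ≤ α3 / q3 := by positivity
  have := absPlus_pos s.1; have := absPlus_pos s.2.1; have := absPlus_pos s.2.2
  have amgm := geom_mean_le_add3 hθ1 hθ2 hθ3
    (by positivity : 0 ≤ c1 * absPlus s.1 ^ (q1 / ν))
    (by positivity : 0 ≤ c2 * absPlus s.2.1 ^ (q2 / ν))
    (by positivity : 0 ≤ c3 * absPlus s.2.2 ^ (q3 / ν)) hα
  have hle := Real.rpow_le_rpow (by positivity) amgm hν.le
  rw [Real.mul_rpow (by positivity) (by positivity), Real.mul_rpow (by positivity) (by positivity),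
    term _ hc1 hq1, term _ hc2 hq2, term _ hc3 hq3] at hle
  exact le_of_eq_of_le (by ring) hle

lemma exists_abs_le_mul_absPlus_rpow_neg (hq1 : 0 < q1) (hq2 : 0 < q2) (hq3 : 0 < q3)
    (hc1 : 0 < c1) (hc2 : 0 < c2) (hc3 : 0 < c3) (hν : 0 < ν) {g a : ℤ × ℤ × ℤ → ℝ}
    (hg : ∃ M : ℝ, ∀ t, |g t| ≤ M) (ha : ∀ t, a t = g t / anisoBase q1 q2 q3 c1 c2 c3 ν t ^ ν)
    {α1 α2 α3 : ℝ} (hα1 : 0 ≤ α1) (hα2 : 0 ≤ α2) (hα3 : 0 ≤ α3)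
    (hα : α1 / q1 + α2 / q2 + α3 / q3 = 1) :
    ∃ C, ∀ s, |a s| ≤ C * absPlus s.1 ^ (-α1) * absPlus s.2.1 ^ (-α2) * absPlus s.2.2 ^ (-α3) := by
  obtain ⟨M, hM⟩ := hg
  set k := c1 ^ (α1 / q1 * ν) * c2 ^ (α2 / q2 * ν) * c3 ^ (α3 / q3 * ν)
  have hk : 0 < k := by positivity
  refine ⟨M / k, fun s => ?_⟩
  have y1 := absPlus_pos s.1; have y2 := absPlus_pos s.2.1; have y3 := absPlus_pos s.2.2
  have hD : 0 < anisoBase q1 q2 q3 c1 c2 c3 ν s ^ ν :=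
    Real.rpow_pos_of_pos (anisoBase_pos hc1 hc2 hc3 s) ν
  calc |a s| = |g s| / anisoBase q1 q2 q3 c1 c2 c3 ν s ^ ν := by
        rw [ha, abs_div, abs_of_pos hD]
    _ ≤ M / (k * (absPlus s.1 ^ α1 * absPlus s.2.1 ^ α2 * absPlus s.2.2 ^ α3)) :=
        div_le_div₀ ((abs_nonneg _).trans (hM s)) (hM s) (by positivity)
          (rpow_mul_rpow_le_anisoBase_rpow hq1 hq2 hq3 hc1 hc2 hc3 hν hα1 hα2 hα3 hα s)
    _ = _ := by
        rw [Real.rpow_neg y1.le, Real.rpow_neg y2.le, Real.rpow_neg y3.le]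
        field_simp

lemma anisoBase_le (hq1 : 0 < q1) (hq2 : 0 < q2) (hq3 : 0 < q3)
    (hc1 : 0 < c1) (hc2 : 0 < c2) (hc3 : 0 < c3) (hν : 0 < ν) {K y : ℝ} (hK : 0 ≤ K) (hy : 0 ≤ y)
    {s : ℤ × ℤ × ℤ} (h1 : absPlus s.1 ≤ K * y ^ (1 / q1)) (h2 : absPlus s.2.1 ≤ K * y ^ (1 / q2))
    (h3 : absPlus s.2.2 ≤ K * y ^ (1 / q3)) :
    anisoBase q1 q2 q3 c1 c2 c3 ν s ≤
      (c1 * K ^ (q1 / ν) + c2 * K ^ (q2 / ν) + c3 * K ^ (q3 / ν)) * y ^ (1 / ν) := by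
  have e1 := rpow_div_le_of_le_mul_rpow (absPlus_pos _).le hK hy hq1 hν h1
  have e2 := rpow_div_le_of_le_mul_rpow (absPlus_pos _).le hK hy hq2 hν h2
  have e3 := rpow_div_le_of_le_mul_rpow (absPlus_pos _).le hK hy hq3 hν h3
  unfold anisoBase
  nlinarith [mul_le_mul_of_nonneg_left e1 hc1.le, mul_le_mul_of_nonneg_left e2 hc2.le,
    mul_le_mul_of_nonneg_left e3 hc3.le]

lemma exists_pos_div_le_on_boxes (hq1 : 0 < q1) (hq2 : 0 < q2) (hq3 : 0 < q3)
    (hc1 : 0 < c1) (hc2 : 0 < c2) (hc3 : 0 < c3) (hν : 0 < ν) {g a : ℤ × ℤ × ℤ → ℝ}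
    (hg1 : Tendsto g cofinite (nhds 1))
    (ha : ∀ t, a t = g t / anisoBase q1 q2 q3 c1 c2 c3 ν t ^ ν) :
    ∃ W : ℤ, ∃ κ > 0, ∀ y ≥ 1, ∀ s : ℤ × ℤ × ℤ,
      W ≤ s.1 → s.1 < W + 2 * ⌈y ^ (1 / q1)⌉₊ →
      0 ≤ s.2.1 → s.2.1 < 2 * ⌈y ^ (1 / q2)⌉₊ →
      0 ≤ s.2.2 → s.2.2 < 2 * ⌈y ^ (1 / q3)⌉₊ → κ / y ≤ a s := by
  obtain ⟨W, hW⟩ := exists_forall_fst_ge_of_eventually_cofinite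
    (hg1.eventually (lt_mem_nhds (by norm_num : (1 : ℝ) / 2 < 1)))
  set K : ℝ := |(W : ℝ)| + 4
  set B := c1 * K ^ (q1 / ν) + c2 * K ^ (q2 / ν) + c3 * K ^ (q3 / ν)
  have hK : 0 ≤ K := by positivity
  have hB : 0 < B := by positivity
  refine ⟨W, 1 / (2 * B ^ ν), by positivity, fun y hy s h1 h1' h2 h2' h3 h3' => ?_⟩
  have hy0 : 0 < y := by linarith
  have hK0 : |((0 : ℤ) : ℝ)| + 4 ≤ K := by simp [K]
  have one_le : ∀ q : ℝ, 0 < q → 1 ≤ y ^ (1 / q) := fun q hq =>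
    Real.one_le_rpow hy (one_div_pos.2 hq).le
  have hD := anisoBase_le hq1 hq2 hq3 hc1 hc2 hc3 hν hK hy0.le
    (absPlus_le_mul (one_le q1 hq1) le_rfl h1 h1')
    (absPlus_le_mul (one_le q2 hq2) hK0 h2 (by rwa [zero_add]))
    (absPlus_le_mul (one_le q3 hq3) hK0 h3 (by rwa [zero_add]))
  have hDpos := anisoBase_pos (q1 := q1) (q2 := q2) (q3 := q3) (ν := ν) hc1 hc2 hc3 s
  calc 1 / (2 * B ^ ν) / y = (1 / 2) / (B * y ^ (1 / ν)) ^ ν := by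
        rw [Real.mul_rpow hB.le (by positivity), ← Real.rpow_mul hy0.le,
          one_div_mul_cancel hν.ne', Real.rpow_one]
        ring
    _ ≤ (1 / 2) / anisoBase q1 q2 q3 c1 c2 c3 ν s ^ ν := by gcongr
    _ ≤ g s / anisoBase q1 q2 q3 c1 c2 c3 ν s ^ ν := by gcongr; exact (hW s h1).le
    _ = a s := (ha s).symm

lemma not_summable_abs_autocorr_plane (hq1 : 0 < q1) (hq2 : 0 < q2) (hq3 : 0 < q3)
    (hc1 : 0 < c1) (hc2 : 0 < c2) (hc3 : 0 < c3) (hν : 0 < ν) {g a : ℤ × ℤ × ℤ → ℝ}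
    (hg1 : Tendsto g cofinite (nhds 1))
    (ha : ∀ t, a t = g t / anisoBase q1 q2 q3 c1 c2 c3 ν t ^ ν)
    (ha2 : Summable fun s => a s ^ 2) (hup : 1 < 1 / (2 * q1) + 1 / q2 + 1 / q3) :
    ¬ Summable fun p : ℤ × ℤ => |autocorr a (0, p.1, p.2)| := by
  intro hS
  obtain ⟨W, κ, hκ, hlow⟩ := exists_pos_div_le_on_boxes hq1 hq2 hq3 hc1 hc2 hc3 hν hg1 ha
  set S := ∑' p : ℤ × ℤ, |autocorr a (0, p.1, p.2)|
  set E := 1 / q1 + 2 * (1 / q2) + 2 * (1 / q3) - 2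
  have hE : 0 < E := by
    have : 1 / (2 * q1) = 1 / q1 / 2 := by field_simp
    simp only [E]; linarith
  have hbound : ∀ y ≥ 1, κ ^ 2 * y ^ E ≤ S := by
    intro y hy
    set N1 := ⌈y ^ (1 / q1)⌉₊
    set N2 := ⌈y ^ (1 / q2)⌉₊
    set N3 := ⌈y ^ (1 / q3)⌉₊
    have hcount := card_mul_card_mul_sq_le_tsum_abs_autocorr ha2 (AddMonoidHom.inr ℤ (ℤ × ℤ)) hS
      (U := Finset.Ico W (W + N1) ×ˢ Finset.Ico 0 (N2 : ℤ) ×ˢ Finset.Ico 0 (N3 : ℤ))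
      (T := Finset.Ico 0 (N2 : ℤ) ×ˢ Finset.Ico 0 (N3 : ℤ)) (ε := κ / y) (by positivity) ?_
    · simp only [Finset.card_product, Int.card_Ico, add_sub_cancel_left, Int.toNat_natCast,
        sub_zero, Nat.cast_mul] at hcount
      calc κ ^ 2 * y ^ E ≤ κ ^ 2 * (N1 * (N2 * N3) ^ 2 / y ^ 2) := by
            gcongr; exact rpow_le_ceil_mul_div hy _ _ _
        _ = N1 * (N2 * N3) * (N2 * N3) * (κ / y) ^ 2 := by ring
        _ ≤ S := hcount
    · rintro ⟨u1, u2, u3⟩ hu ⟨t2, t3⟩ ht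
      simp only [Finset.mem_product, Finset.mem_Ico] at hu ht
      apply hlow y hy <;>
        simp only [AddMonoidHom.inr_apply, Prod.mk_add_mk, add_zero] <;> omega
  obtain ⟨y, hy1, hy⟩ := ((eventually_ge_atTop 1).and
    ((tendsto_rpow_atTop hE).eventually_gt_atTop (S / κ ^ 2))).exists
  rw [div_lt_iff₀' (by positivity)] at hy
  linarith [hbound y hy1]

end Model

theorem stmt_10_general (q1 q2 q3 c1 c2 c3 ν : ℝ)
    (hq1 : 0 < q1) (hq2 : 0 < q2) (hq3 : 0 < q3)
    (hc1 : 0 < c1) (hc2 : 0 < c2) (hc3 : 0 < c3) (hν : 0 < ν)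
    (g : ℤ × ℤ × ℤ → ℝ) (hg : ∃ M : ℝ, ∀ t, |g t| ≤ M)
    (hg1 : Tendsto g cofinite (nhds 1))
    (a : ℤ × ℤ × ℤ → ℝ)
    (ha : ∀ t : ℤ × ℤ × ℤ, a t = g t /
      (c1 * (max |(t.1 : ℝ)| 1) ^ (q1 / ν) + c2 * (max |(t.2.1 : ℝ)| 1) ^ (q2 / ν) +
        c3 * (max |(t.2.2 : ℝ)| 1) ^ (q3 / ν)) ^ ν)
    (r : ℤ × ℤ × ℤ → ℝ)
    (hr : ∀ t : ℤ × ℤ × ℤ, r t = ∑' s : ℤ × ℤ × ℤ, a s * a (t + s))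
    (hRegionLow : 1 / (2 * q1) + 1 / (2 * q2) + 1 / q3 < 1)
    (hRegionUp : 1 < 1 / (2 * q1) + 1 / q2 + 1 / q3) :
    ¬ Summable (fun p : ℤ × ℤ => |r (0, p.1, p.2)|) ∧
      Summable (fun t3 : ℤ => |r (0, 0, t3)|) := by
  obtain rfl : r = autocorr a := funext hr
  obtain ⟨α1, α2, α3, hα1, hα2, hα3, hα⟩ := exists_decay_exponents hq1 hq2 hq3 hRegionLow
  obtain ⟨C, hC⟩ := exists_abs_le_mul_absPlus_rpow_neg hq1 hq2 hq3 hc1 hc2 hc3 hν hg ha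
    (by linarith) (by linarith) (by linarith) hα
  have hf : Summable fun n => (C * absPlus n ^ (-α1)) ^ 2 := by
    simpa only [mul_pow] using (summable_absPlus_rpow_neg_sq hα1).mul_left (C ^ 2)
  have hg2 := summable_absPlus_rpow_neg_sq hα2
  have ha2 : Summable fun s => a s ^ 2 :=
    summable_sq_of_abs_le_mul hf hg2 (summable_absPlus_rpow_neg_sq (by linarith)) hC
  exact ⟨not_summable_abs_autocorr_plane hq1 hq2 hq3 hc1 hc2 hc3 hν hg1 ha ha2 hRegionUp,
    summable_abs_autocorr_of_summable a _ <| summable_abs_mul_translate_of_abs_le_mul hf hg2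
      (summable_absPlus_rpow_neg hα3) (fun n => (Real.rpow_pos_of_pos (absPlus_pos n) _).le) hC⟩

theorem stmt_10 (q1 q2 q3 c1 c2 c3 ν : ℝ)
    (hq1 : 0 < q1) (hq2 : 0 < q2) (hq3 : 0 < q3)
    (hc1 : 0 < c1) (hc2 : 0 < c2) (hc3 : 0 < c3) (hν : 0 < ν)
    (g : ℤ × ℤ × ℤ → ℝ) (hg : ∃ M : ℝ, ∀ t, |g t| ≤ M)
    (hg1 : Tendsto g cofinite (nhds 1))
    (a : ℤ × ℤ × ℤ → ℝ)
    (ha : ∀ t : ℤ × ℤ × ℤ, a t = g t /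
      (c1 * (max |(t.1 : ℝ)| 1) ^ (q1 / ν) + c2 * (max |(t.2.1 : ℝ)| 1) ^ (q2 / ν) +
        c3 * (max |(t.2.2 : ℝ)| 1) ^ (q3 / ν)) ^ ν)
    (hQlow : 1 < 1 / q1 + 1 / q2 + 1 / q3)
    (hQup : 1 / q1 + 1 / q2 + 1 / q3 < 2)
    (r : ℤ × ℤ × ℤ → ℝ)
    (hr : ∀ t : ℤ × ℤ × ℤ, r t = ∑' s : ℤ × ℤ × ℤ, a s * a (t + s))
    (hRegionLow : 1 / (2 * q1) + 1 / (2 * q2) + 1 / q3 < 1)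
    (hRegionUp : 1 < 1 / (2 * q1) + 1 / q2 + 1 / q3) :
    ¬ Summable (fun p : ℤ × ℤ => |r (0, p.1, p.2)|) ∧
      Summable (fun t3 : ℤ => |r (0, 0, t3)|) :=
  stmt_10_general q1 q2 q3 c1 c2 c3 ν hq1 hq2 hq3 hc1 hc2 hc3 hν g hg hg1 a ha r hr hRegionLow
    hRegionUp
end

section
/- Assume 1/(2q1) + 1/q2 + 1/q3 < 1 < Q. Fix x1, x2, x3 > 0 and define f1(u1,u2,u3) := 1(0 < u2 < x2)·1(0 < u3 < x3) · ∫_0^{x1} ∫_ℝ ∫_ℝ (c1·|t1−u1|^{q1/ν} + c2·|t2|^{q2/ν} + c3·|t3|^{q3/ν})^{−ν} dt1 dt2 dt3. Then ∫_{ℝ³} f1(u)² du < ∞ (in particular the inner integral is finite for almost every u ∈ ℝ³), i.e. the Gaussian random field 𝒴₁ of the paper is well defined. -/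
/-!
Integrating out `t₃` and then `t₂` is exact by scaling:
`∫ (a + c|t|^p)^(-m) dt = c^(-1/p) a^(1/p - m) ∫ (1 + |s|^p)^(-m) ds`, and the last integral is
finite when `m p > 1`. With `pᵢ = qᵢ/ν` this turns the inner integral into a constant times
`H(u₁) = ∫₀^{x₁} |t - u₁|^(-β) dt`, `β = q₁ (1 - 1/q₂ - 1/q₃)`, and the hypotheses say exactly
that `1/2 < β < 1`. Since `β < 1`, `H` is bounded; since `1 + |u| ≤ (1 + x₁)(1 + |t - u|)` for
`t ∈ (0, x₁]`, also `H(u) ≲ (1 + |u|)^(-β)`, which is square integrable because `2β > 1`.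
The indicator in `(u₂, u₃)` only contributes the area `x₂ x₃`.
-/

open MeasureTheory Set
open scoped ENNReal

theorem lintegral_comp_mul_left (f : ℝ → ℝ≥0∞) {a : ℝ} (ha : a ≠ 0) :
    ∫⁻ s, f (a * s) = ENNReal.ofReal |a⁻¹| * ∫⁻ s, f s := by
  calc ∫⁻ s, f (a * s) = ∫⁻ s, f s ∂(Measure.map (a * ·) volume) :=
        (lintegral_map_equiv f (Homeomorph.mulLeft₀ a ha).toMeasurableEquiv).symm
    _ = ENNReal.ofReal |a⁻¹| * ∫⁻ s, f s := by
        rw [Real.map_volume_mul_left ha, lintegral_smul_measure, smul_eq_mul]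

theorem lintegral_lt_top_of_le_mul_one_add_abs_rpow_neg {g : ℝ → ℝ≥0∞} {C : ℝ≥0∞} {s : ℝ}
    (hC : C ≠ ⊤) (hs : 1 < s) (hg : ∀ t, g t ≤ C * ENNReal.ofReal ((1 + |t|) ^ (-s))) :
    ∫⁻ t, g t < ⊤ := by
  refine (lintegral_mono hg).trans_lt ?_
  rw [lintegral_const_mul' _ _ hC]
  have hfin := finite_integral_one_add_norm (E := ℝ) (μ := volume) (r := s) (by simpa using hs)
  simp only [Real.norm_eq_abs] at hfin
  exact ENNReal.mul_lt_top hC.lt_top hfin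

theorem one_add_abs_rpow_le {p : ℝ} (hp : 0 ≤ p) (s : ℝ) :
    (1 + |s|) ^ p ≤ 2 ^ p * (1 + |s| ^ p) := by
  rcases le_total |s| 1 with hs | hs
  · calc (1 + |s|) ^ p ≤ 2 ^ p := by gcongr; linarith
      _ ≤ 2 ^ p * (1 + |s| ^ p) :=
          le_mul_of_one_le_right (by positivity) (le_add_of_nonneg_right (by positivity))
  · calc (1 + |s|) ^ p ≤ (2 * |s|) ^ p := by gcongr; linarith
      _ = 2 ^ p * |s| ^ p := Real.mul_rpow (by norm_num) (abs_nonneg s)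
      _ ≤ 2 ^ p * (1 + |s| ^ p) := by gcongr; linarith

theorem lintegral_one_add_abs_rpow_rpow_neg_lt_top {p m : ℝ} (hp : 0 < p) (hmp : 1 < m * p) :
    ∫⁻ y, ENNReal.ofReal ((1 + |y| ^ p) ^ (-m)) < ⊤ := by
  have hm : 0 < m := pos_of_mul_pos_left (by linarith) hp.le
  refine lintegral_lt_top_of_le_mul_one_add_abs_rpow_neg (C := ENNReal.ofReal (2 ^ (m * p)))
    ENNReal.ofReal_ne_top hmp fun s => ?_
  have key : (1 + |s|) ^ (p * m) ≤ 2 ^ (p * m) * (1 + |s| ^ p) ^ m := by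
    rw [Real.rpow_mul (by positivity), Real.rpow_mul (by norm_num),
      ← Real.mul_rpow (by positivity) (by positivity)]
    exact Real.rpow_le_rpow (by positivity) (one_add_abs_rpow_le hp.le s) hm.le
  rw [← ENNReal.ofReal_mul (by positivity)]
  refine ENNReal.ofReal_le_ofReal ?_
  rw [Real.rpow_neg (by positivity), Real.rpow_neg (by positivity), ← div_eq_mul_inv,
    le_div_iff₀ (by positivity), inv_mul_le_iff₀ (by positivity), mul_comm m p,
    mul_comm ((1 + |s| ^ p) ^ m)]
  exact key

theorem lintegral_add_mul_abs_rpow_rpow_neg {a c p : ℝ} (ha : 0 < a) (hc : 0 < c) (hp : 0 < p)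
    (m : ℝ) :
    ∫⁻ t, ENNReal.ofReal ((a + c * |t| ^ p) ^ (-m)) =
      ENNReal.ofReal (c ^ (-(1 / p)) * a ^ (1 / p - m)) *
        ∫⁻ y, ENNReal.ofReal ((1 + |y| ^ p) ^ (-m)) := by
  set l := (a / c) ^ (1 / p) with hl
  have hl0 : 0 < l := by positivity
  have hscale : ∀ s, a + c * |l * s| ^ p = a * (1 + |s| ^ p) := fun s => by
    rw [abs_mul, abs_of_pos hl0, Real.mul_rpow hl0.le (abs_nonneg s), hl,
      ← Real.rpow_mul (by positivity), one_div_mul_cancel hp.ne', Real.rpow_one]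
    field_simp
  have hchange := lintegral_comp_mul_left
    (fun s => ENNReal.ofReal ((a + c * |l * s| ^ p) ^ (-m))) (a := l⁻¹) (by positivity)
  simp only [inv_inv, abs_of_pos hl0] at hchange
  simp_rw [mul_inv_cancel_left₀ hl0.ne'] at hchange
  have hfactor : ∀ s, ENNReal.ofReal ((a + c * |l * s| ^ p) ^ (-m)) =
      ENNReal.ofReal (a ^ (-m)) * ENNReal.ofReal ((1 + |s| ^ p) ^ (-m)) := fun s => by
    rw [hscale, Real.mul_rpow ha.le (by positivity), ENNReal.ofReal_mul (by positivity)]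
  simp_rw [hchange, hfactor]
  rw [lintegral_const_mul' _ _ ENNReal.ofReal_ne_top, ← mul_assoc, ← ENNReal.ofReal_mul hl0.le]
  congr 2
  rw [hl, Real.div_rpow ha.le hc.le, div_eq_mul_inv, ← Real.rpow_neg hc.le, sub_eq_add_neg,
    Real.rpow_add ha]
  ring

theorem lintegral_lintegral_add_mul_abs_rpow_rpow_neg {b c₂ c₃ p₂ p₃ : ℝ} (hb : 0 < b)
    (hc₂ : 0 < c₂) (hc₃ : 0 < c₃) (hp₂ : 0 < p₂) (hp₃ : 0 < p₃) (m : ℝ) :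
    ∫⁻ t₂, ∫⁻ t₃, ENNReal.ofReal ((b + c₂ * |t₂| ^ p₂ + c₃ * |t₃| ^ p₃) ^ (-m)) =
      ENNReal.ofReal (c₃ ^ (-(1 / p₃)) * c₂ ^ (-(1 / p₂)) * b ^ (-(m - 1 / p₂ - 1 / p₃))) *
        (∫⁻ y, ENNReal.ofReal ((1 + |y| ^ p₃) ^ (-m))) *
        ∫⁻ y, ENNReal.ofReal ((1 + |y| ^ p₂) ^ (-(m - 1 / p₃))) := by
  have hinner : ∀ t₂ : ℝ, ∫⁻ t₃, ENNReal.ofReal ((b + c₂ * |t₂| ^ p₂ + c₃ * |t₃| ^ p₃) ^ (-m)) =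
      ENNReal.ofReal (c₃ ^ (-(1 / p₃))) *
        ENNReal.ofReal ((b + c₂ * |t₂| ^ p₂) ^ (-(m - 1 / p₃))) *
        ∫⁻ y, ENNReal.ofReal ((1 + |y| ^ p₃) ^ (-m)) := fun t₂ => by
    rw [lintegral_add_mul_abs_rpow_rpow_neg (by positivity) hc₃ hp₃, neg_sub,
      ENNReal.ofReal_mul (by positivity)]
  simp_rw [hinner]
  rw [lintegral_mul_const _ (by fun_prop), lintegral_const_mul' _ _ ENNReal.ofReal_ne_top,
    lintegral_add_mul_abs_rpow_rpow_neg hb hc₂ hp₂, ← mul_assoc,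
    ← ENNReal.ofReal_mul (by positivity), mul_right_comm, ← mul_assoc (c₃ ^ _)]
  congr 5
  ring

theorem setLIntegral_lintegral_lintegral_eq_mul {c₁ c₂ c₃ p₂ p₃ : ℝ} (hc₁ : 0 < c₁)
    (hc₂ : 0 < c₂) (hc₃ : 0 < c₃) (hp₂ : 0 < p₂) (hp₃ : 0 < p₃) (p₁ m u : ℝ) (s : Set ℝ) :
    ∫⁻ t₁ in s, ∫⁻ t₂, ∫⁻ t₃,
        ENNReal.ofReal ((c₁ * |t₁ - u| ^ p₁ + c₂ * |t₂| ^ p₂ + c₃ * |t₃| ^ p₃) ^ (-m)) =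
      ENNReal.ofReal (c₃ ^ (-(1 / p₃)) * c₂ ^ (-(1 / p₂)) * c₁ ^ (-(m - 1 / p₂ - 1 / p₃))) *
        (∫⁻ y, ENNReal.ofReal ((1 + |y| ^ p₃) ^ (-m))) *
        (∫⁻ y, ENNReal.ofReal ((1 + |y| ^ p₂) ^ (-(m - 1 / p₃)))) *
        ∫⁻ t₁ in s, ENNReal.ofReal (|t₁ - u| ^ (-(p₁ * (m - 1 / p₂ - 1 / p₃)))) := by
  rw [← lintegral_const_mul _ (by fun_prop)]
  have hne : ∀ᵐ t₁ ∂volume.restrict s, t₁ ∉ ({u} : Set ℝ) :=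
    ae_restrict_of_ae (measure_eq_zero_iff_ae_notMem.mp (measure_singleton u))
  refine lintegral_congr_ae (hne.mono fun t₁ ht₁ => ?_)
  have hd : 0 < |t₁ - u| := abs_pos.mpr (sub_ne_zero.mpr ht₁)
  dsimp only
  rw [lintegral_lintegral_add_mul_abs_rpow_rpow_neg (by positivity) hc₂ hc₃ hp₂ hp₃,
    mul_right_comm _ _ (ENNReal.ofReal _), mul_right_comm _ _ (ENNReal.ofReal _),
    ← ENNReal.ofReal_mul (by positivity), Real.mul_rpow hc₁.le (by positivity),
    ← Real.rpow_mul hd.le, mul_assoc _ (c₁ ^ _), neg_mul_eq_mul_neg]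

theorem locallyIntegrable_abs_rpow_neg {β : ℝ} (hβ : β < 1) :
    LocallyIntegrable (fun s : ℝ => |s| ^ (-β)) :=
  locallyIntegrable_of_norm_le_rpow (C := 1) (by simp) (by simpa using hβ)
    (ae_of_all _ fun s => by rw [Real.norm_of_nonneg (by positivity), one_mul, Real.norm_eq_abs])
    (Measurable.aestronglyMeasurable (by fun_prop))

theorem setLIntegral_Ioc_abs_sub_rpow_neg_le {β : ℝ} (hβ : 0 ≤ β) (X u : ℝ) :
    ∫⁻ t in Ioc 0 X, ENNReal.ofReal (|t - u| ^ (-β)) ≤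
      ENNReal.ofReal X + ∫⁻ s in Icc (-1) 1, ENNReal.ofReal (|s| ^ (-β)) := by
  set g := (Icc (-1 : ℝ) 1).indicator fun s => ENNReal.ofReal (|s| ^ (-β))
  have hg : ∀ s : ℝ, ENNReal.ofReal (|s| ^ (-β)) ≤ 1 + g s := fun s => by
    by_cases hs : s ∈ Icc (-1 : ℝ) 1
    · simp only [g, indicator_of_mem hs, le_add_self]
    · refine le_add_right (ENNReal.ofReal_le_one.mpr (Real.rpow_le_one_of_one_le_of_nonpos ?_
        (neg_nonpos.mpr hβ)))
      rw [mem_Icc, not_and_or, not_le, not_le] at hs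
      rcases hs with hs | hs
      · rw [abs_of_neg (by linarith)]; linarith
      · rw [abs_of_pos (by linarith)]; linarith
  calc ∫⁻ t in Ioc 0 X, ENNReal.ofReal (|t - u| ^ (-β))
      ≤ ∫⁻ t in Ioc 0 X, (1 + g (t - u)) := lintegral_mono fun t => hg (t - u)
    _ ≤ ENNReal.ofReal X + ∫⁻ t, g (t - u) := by
        rw [lintegral_add_left measurable_const, setLIntegral_const, one_mul, Real.volume_Ioc,
          sub_zero]
        gcongr
        exact Measure.restrict_le_self
    _ = ENNReal.ofReal X + ∫⁻ s in Icc (-1) 1, ENNReal.ofReal (|s| ^ (-β)) := by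
        rw [lintegral_sub_right_eq_self, lintegral_indicator measurableSet_Icc]

theorem abs_sub_rpow_neg_le {β t u X : ℝ} (hβ₀ : 0 < β) (hβ₁ : β ≤ 1) (ht : |t| ≤ X) :
    |t - u| ^ (-β) ≤ (1 + X) ^ β * (1 + |u|) ^ (-β) * (|t - u| ^ (-β) + 1) := by
  have hX : 0 ≤ X := (abs_nonneg t).trans ht
  rcases (abs_nonneg (t - u)).eq_or_lt with hd | hd
  · rw [← hd, Real.zero_rpow (by linarith)]
    positivity
  have hw : 1 + |u| ≤ (1 + X) * (1 + |t - u|) := by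
    have := abs_sub_abs_le_abs_sub u t
    rw [abs_sub_comm u t] at this
    nlinarith
  have hwβ : (1 + |u|) ^ β ≤ (1 + X) ^ β * (1 + |t - u| ^ β) :=
    calc (1 + |u|) ^ β ≤ ((1 + X) * (1 + |t - u|)) ^ β := by gcongr
      _ = (1 + X) ^ β * (1 + |t - u|) ^ β := Real.mul_rpow (by positivity) (by positivity)
      _ ≤ (1 + X) ^ β * (1 + |t - u| ^ β) := by
          gcongr
          simpa using Real.rpow_add_le_add_rpow zero_le_one hd.le hβ₀.le hβ₁
  rw [Real.rpow_neg (by positivity : (0 : ℝ) ≤ 1 + |u|), mul_right_comm, ← div_eq_mul_inv,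
    le_div_iff₀ (by positivity)]
  calc |t - u| ^ (-β) * (1 + |u|) ^ β
      ≤ |t - u| ^ (-β) * ((1 + X) ^ β * (1 + |t - u| ^ β)) := by gcongr
    _ = (1 + X) ^ β * (|t - u| ^ (-β) + 1) := by
        rw [mul_left_comm, mul_add, mul_one, ← Real.rpow_add hd, neg_add_cancel, Real.rpow_zero,
          add_comm 1]

theorem exists_setLIntegral_Ioc_abs_sub_rpow_neg_le {β : ℝ} (hβ₀ : 0 < β) (hβ₁ : β < 1) (X : ℝ) :
    ∃ C ≠ ⊤, ∀ u, ∫⁻ t in Ioc 0 X, ENNReal.ofReal (|t - u| ^ (-β)) ≤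
      C * ENNReal.ofReal ((1 + |u|) ^ (-β)) := by
  set J := ∫⁻ s in Icc (-1) 1, ENNReal.ofReal (|s| ^ (-β))
  have hJ : J ≠ ⊤ :=
    ((locallyIntegrable_abs_rpow_neg hβ₁).integrableOn_isCompact isCompact_Icc).lintegral_lt_top.ne
  refine ⟨ENNReal.ofReal ((1 + X) ^ β) * (ENNReal.ofReal X + J + ENNReal.ofReal X),
    by finiteness, fun u => ?_⟩
  set H := ∫⁻ t in Ioc 0 X, ENNReal.ofReal (|t - u| ^ (-β))
  set w := ENNReal.ofReal ((1 + X) ^ β * (1 + |u|) ^ (-β)) with hw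
  calc H ≤ ∫⁻ t in Ioc 0 X, w * (ENNReal.ofReal (|t - u| ^ (-β)) + 1) := by
        refine setLIntegral_mono' measurableSet_Ioc fun t ht => ?_
        have ht' : |t| ≤ X := by rw [abs_of_pos ht.1]; exact ht.2
        rw [← ENNReal.ofReal_one, ← ENNReal.ofReal_add (by positivity) zero_le_one,
          ← ENNReal.ofReal_mul' (by positivity)]
        exact ENNReal.ofReal_le_ofReal (abs_sub_rpow_neg_le hβ₀ hβ₁.le ht')
    _ = w * (H + ENNReal.ofReal X) := by
        rw [lintegral_const_mul' _ _ ENNReal.ofReal_ne_top, lintegral_add_right _ measurable_const,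
          setLIntegral_const, one_mul, Real.volume_Ioc, sub_zero]
    _ ≤ w * (ENNReal.ofReal X + J + ENNReal.ofReal X) := by
        gcongr
        exact setLIntegral_Ioc_abs_sub_rpow_neg_le hβ₀.le X u
    _ = _ := by
        rw [hw, ENNReal.ofReal_mul' (by positivity), mul_right_comm]

theorem lintegral_sq_setLIntegral_Ioc_abs_sub_rpow_neg_lt_top {β : ℝ} (hβ₀ : 1 / 2 < β)
    (hβ₁ : β < 1) (X : ℝ) :
    ∫⁻ u, (∫⁻ t in Ioc 0 X, ENNReal.ofReal (|t - u| ^ (-β))) ^ 2 < ⊤ := by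
  obtain ⟨C, hC, hH⟩ := exists_setLIntegral_Ioc_abs_sub_rpow_neg_le (by linarith) hβ₁ X
  refine lintegral_lt_top_of_le_mul_one_add_abs_rpow_neg (C := C ^ 2) (s := 2 * β) (by finiteness)
    (by linarith) fun u => ?_
  calc (∫⁻ t in Ioc 0 X, ENNReal.ofReal (|t - u| ^ (-β))) ^ 2
      ≤ (C * ENNReal.ofReal ((1 + |u|) ^ (-β))) ^ 2 := by gcongr; exact hH u
    _ = C ^ 2 * ENNReal.ofReal ((1 + |u|) ^ (-(2 * β))) := by
        rw [mul_pow, ← ENNReal.ofReal_pow (by positivity), ← Real.rpow_natCast,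
          ← Real.rpow_mul (by positivity)]
        congr 3
        push_cast
        ring

theorem lintegral_prod_indicator_preimage_snd {α β : Type*} [MeasurableSpace α]
    [MeasurableSpace β] {μ : Measure α} {ν : Measure β} [SFinite ν] {f : α → ℝ≥0∞}
    (hf : AEMeasurable f μ) {T : Set β} (hT : MeasurableSet T) :
    ∫⁻ z, (Prod.snd ⁻¹' T).indicator (fun z => f z.1) z ∂μ.prod ν = (∫⁻ x, f x ∂μ) * ν T := by
  have hsplit :
      (Prod.snd ⁻¹' T).indicator (fun z => f z.1) = fun z => f z.1 * T.indicator 1 z.2 := by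
    ext z
    by_cases hz : z.2 ∈ T <;> simp [hz]
  rw [hsplit, ← lintegral_indicator_one hT]
  exact lintegral_prod_mul hf (aemeasurable_one.indicator hT)

theorem exists_setLIntegral_lintegral_lintegral_eq_mul {q₂ q₃ c₁ c₂ c₃ ν : ℝ} (hq₂ : 0 < q₂)
    (hq₃ : 0 < q₃) (hc₁ : 0 < c₁) (hc₂ : 0 < c₂) (hc₃ : 0 < c₃) (hν : 0 < ν)
    (h₂₃ : 1 / q₂ + 1 / q₃ < 1) (q₁ : ℝ) (s : Set ℝ) :
    ∃ K ≠ ⊤, ∀ u, ∫⁻ t₁ in s, ∫⁻ t₂, ∫⁻ t₃,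
        ENNReal.ofReal ((c₁ * |t₁ - u| ^ (q₁ / ν) + c₂ * |t₂| ^ (q₂ / ν) +
          c₃ * |t₃| ^ (q₃ / ν)) ^ (-ν)) =
      K * ∫⁻ t₁ in s, ENNReal.ofReal (|t₁ - u| ^ (-(q₁ * (1 - 1 / q₂ - 1 / q₃)))) := by
  have hexp : q₁ / ν * (ν - 1 / (q₂ / ν) - 1 / (q₃ / ν)) = q₁ * (1 - 1 / q₂ - 1 / q₃) := by
    field_simp
  have hI₃ : 1 < ν * (q₃ / ν) := by
    rw [mul_div_cancel₀ _ hν.ne']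
    linarith [(div_lt_iff₀ hq₃).mp (show 1 / q₃ < 1 by linarith [one_div_pos.mpr hq₂])]
  have hI₂ : 1 < (ν - 1 / (q₃ / ν)) * (q₂ / ν) := by
    rw [show (ν - 1 / (q₃ / ν)) * (q₂ / ν) = (1 - 1 / q₃) * q₂ by field_simp]
    exact (div_lt_iff₀ hq₂).mp (by linarith)
  refine ⟨_, ?_, fun u => (setLIntegral_lintegral_lintegral_eq_mul hc₁ hc₂ hc₃
    (div_pos hq₂ hν) (div_pos hq₃ hν) (q₁ / ν) ν u s).trans (by rw [hexp])⟩
  exact ENNReal.mul_ne_top (ENNReal.mul_ne_top ENNReal.ofReal_ne_top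
    (lintegral_one_add_abs_rpow_rpow_neg_lt_top (div_pos hq₃ hν) hI₃).ne)
    (lintegral_one_add_abs_rpow_rpow_neg_lt_top (div_pos hq₂ hν) hI₂).ne

theorem stmt_12_general (q1 q2 q3 c1 c2 c3 ν x1 x2 x3 : ℝ)
    (hq1 : 0 < q1) (hq2 : 0 < q2) (hq3 : 0 < q3)
    (hc1 : 0 < c1) (hc2 : 0 < c2) (hc3 : 0 < c3) (hν : 0 < ν)
    (hlow : 1 / (2 * q1) + 1 / q2 + 1 / q3 < 1)
    (hup : 1 < 1 / q1 + 1 / q2 + 1 / q3) :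
    (∫⁻ u : ℝ × ℝ × ℝ,
      ({u : ℝ × ℝ × ℝ | 0 < u.2.1 ∧ u.2.1 < x2 ∧ 0 < u.2.2 ∧ u.2.2 < x3}.indicator
        (fun u => ∫⁻ t1 in Set.Ioc (0 : ℝ) x1, ∫⁻ t2 : ℝ, ∫⁻ t3 : ℝ,
          ENNReal.ofReal ((c1 * |t1 - u.1| ^ (q1 / ν) + c2 * |t2| ^ (q2 / ν) +
            c3 * |t3| ^ (q3 / ν)) ^ (-ν))) u) ^ 2) < ⊤ := by
  have h₂₃ : 1 / q2 + 1 / q3 < 1 := by linarith [one_div_pos.mpr (mul_pos two_pos hq1)]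
  obtain ⟨K, hK, hF⟩ :=
    exists_setLIntegral_lintegral_lintegral_eq_mul hq2 hq3 hc1 hc2 hc3 hν h₂₃ q1 (Ioc 0 x1)
  set β := q1 * (1 - 1 / q2 - 1 / q3)
  have hβ₀ : 1 / 2 < β := by
    have := (div_lt_iff₀ (by positivity)).mp (show 1 / (2 * q1) < 1 - 1 / q2 - 1 / q3 by linarith)
    linarith
  have hβ₁ : β < 1 := by
    have := (lt_div_iff₀ hq1).mp (show 1 - 1 / q2 - 1 / q3 < 1 / q1 by linarith)
    linarith
  set H := fun u₁ : ℝ => ∫⁻ t in Ioc 0 x1, ENNReal.ofReal (|t - u₁| ^ (-β))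
  have hH : Measurable H := Measurable.lintegral_prod_right (by fun_prop)
  have hS : {u : ℝ × ℝ × ℝ | 0 < u.2.1 ∧ u.2.1 < x2 ∧ 0 < u.2.2 ∧ u.2.2 < x3} =
      Prod.snd ⁻¹' Ioo 0 x2 ×ˢ Ioo 0 x3 := by
    ext u
    simp [and_assoc]
  calc _ = ∫⁻ u : ℝ × ℝ × ℝ,
        (Prod.snd ⁻¹' Ioo 0 x2 ×ˢ Ioo 0 x3).indicator (fun u => (K * H u.1) ^ 2) u := by
        rw [hS]
        congr 1
        ext u
        by_cases hu : u.2 ∈ Ioo 0 x2 ×ˢ Ioo 0 x3 <;> simp [hu, hF, H]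
    _ = (∫⁻ u₁, (K * H u₁) ^ 2) * volume (Ioo 0 x2 ×ˢ Ioo 0 x3) := by
        rw [Measure.volume_eq_prod]
        exact lintegral_prod_indicator_preimage_snd ((hH.const_mul K).pow_const 2).aemeasurable
          (measurableSet_Ioo.prod measurableSet_Ioo)
    _ < ⊤ := by
        simp_rw [mul_pow]
        rw [lintegral_const_mul' _ _ (by finiteness), Measure.volume_eq_prod, Measure.prod_prod]
        exact ENNReal.mul_lt_top
          (ENNReal.mul_lt_top (by finiteness)
            (lintegral_sq_setLIntegral_Ioc_abs_sub_rpow_neg_lt_top hβ₀ hβ₁ x1))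
          (by simp [Real.volume_Ioo, ENNReal.mul_lt_top])

theorem stmt_12 (q1 q2 q3 c1 c2 c3 ν x1 x2 x3 : ℝ)
    (hq1 : 0 < q1) (hq2 : 0 < q2) (hq3 : 0 < q3)
    (hc1 : 0 < c1) (hc2 : 0 < c2) (hc3 : 0 < c3) (hν : 0 < ν)
    (hx1 : 0 < x1) (hx2 : 0 < x2) (hx3 : 0 < x3)
    (hlow : 1 / (2 * q1) + 1 / q2 + 1 / q3 < 1)
    (hup : 1 < 1 / q1 + 1 / q2 + 1 / q3) :
    (∫⁻ u : ℝ × ℝ × ℝ,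
      ({u : ℝ × ℝ × ℝ | 0 < u.2.1 ∧ u.2.1 < x2 ∧ 0 < u.2.2 ∧ u.2.2 < x3}.indicator
        (fun u => ∫⁻ t1 in Set.Ioc (0 : ℝ) x1, ∫⁻ t2 : ℝ, ∫⁻ t3 : ℝ,
          ENNReal.ofReal ((c1 * |t1 - u.1| ^ (q1 / ν) + c2 * |t2| ^ (q2 / ν) +
            c3 * |t3| ^ (q3 / ν)) ^ (-ν))) u) ^ 2) < ⊤ :=
  stmt_12_general q1 q2 q3 c1 c2 c3 ν x1 x2 x3 hq1 hq2 hq3 hc1 hc2 hc3 hν hlow hup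
end

section
/- Assume 1/(2q1) + 1/(2q2) + 1/(2q3) < 1 < 1/(2q1) + 1/q2 + 1/q3. Fix x2, x3 > 0 and define f23(u1,u2,u3) := ∫_0^{x2} ∫_0^{x3} (c1·|u1|^{q1/ν} + c2·|t2−u2|^{q2/ν} + c3·|t3−u3|^{q3/ν})^{−ν} dt2 dt3. Then ∫_{ℝ³} f23(u)² du < ∞, i.e. the Gaussian random field 𝒴₂₃ of the paper is well defined. -/
/-!
For weights `θ₁ + θ₂ + θ₃ = 1`, weighted AM–GM bounds the kernel by a constant times
`|u₁|^(-q₁θ₁) |t₂ - u₂|^(-q₂θ₂) |t₃ - u₃|^(-q₃θ₃)`, so `f₂₃(u) ≲ |u₁|^(-q₁θ₁) P₂(u₂) P₃(u₃)` with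
`Pᵢ(v) = ∫₀^{xᵢ} |t - v|^(-qᵢθᵢ) dt`. Now `|u₁|^(-2q₁θ₁)` is integrable near `0` iff
`θ₁ < 1/(2q₁)` and at infinity iff `θ₁ > 1/(2q₁)`, while `Pᵢ` is bounded when `θᵢ < 1/qᵢ` and
decays like `|v|^(-qᵢθᵢ)`, so that `Pᵢ²` is integrable at infinity when `θᵢ > 1/(2qᵢ)`.
Split `ℝ³` into eight boxes according to whether each coordinate is small or large; the two
hypotheses on the `qᵢ` are exactly what is needed to find, on each box, weights `θ` meeting
the three constraints of that box.
-/

open MeasureTheory Set ENNReal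

lemma integrableOn_abs_rpow_neg_Icc {β : ℝ} (hβ : β < 1) (R : ℝ) :
    IntegrableOn (fun u : ℝ => |u| ^ (-β)) (Icc (-R) R) := by
  refine (locallyIntegrable_of_norm_le_rpow (μ := volume) (C := 1) (by simp) (by simpa using hβ)
    (.of_forall fun u => ?_) (continuous_abs.measurable.pow_const _).aestronglyMeasurable)
    |>.integrableOn_isCompact isCompact_Icc
  simp [abs_of_nonneg (Real.rpow_nonneg (abs_nonneg u) _)]

lemma integrableOn_abs_rpow_neg_compl_Icc {R β : ℝ} (hR : 0 < R) (hβ : 1 < β) :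
    IntegrableOn (fun u : ℝ => |u| ^ (-β)) (Icc (-R) R)ᶜ := by
  have hIoi : IntegrableOn (fun u : ℝ => |u| ^ (-β)) (Ioi R) :=
    (integrableOn_Ioi_rpow_of_lt (a := -β) (by linarith) hR).congr_fun
      (fun u hu => by simp only [abs_of_pos (hR.trans hu)]) measurableSet_Ioi
  have hIio : IntegrableOn (fun u : ℝ => |u| ^ (-β)) (Iio (-R)) := by
    refine (IntegrableOn.comp_neg_Iio (c := -R) (by rwa [neg_neg])).congr_fun
      (fun u _ => ?_) measurableSet_Iio
    simp
  refine (hIio.union hIoi).mono_set fun u hu => ?_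
  simp only [mem_compl_iff, mem_Icc, not_and_or, not_le] at hu
  exact hu

lemma setLIntegral_abs_rpow_neg_cond_lt_top {R β : ℝ} (hR : 0 < R) (b : Bool)
    (hβ : cond b (β < 1) (1 < β)) :
    ∫⁻ v in cond b (Icc (-R) R) (Icc (-R) R)ᶜ, ENNReal.ofReal (|v| ^ (-β)) < ⊤ := by
  cases b
  · exact (integrableOn_abs_rpow_neg_compl_Icc hR hβ).setLIntegral_lt_top
  · exact (integrableOn_abs_rpow_neg_Icc hβ R).setLIntegral_lt_top

lemma ofReal_abs_rpow_neg_sq (v β : ℝ) :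
    ENNReal.ofReal (|v| ^ (-β)) ^ 2 = ENNReal.ofReal (|v| ^ (-(2 * β))) := by
  rw [← ENNReal.ofReal_pow (by positivity), ← Real.rpow_natCast, ← Real.rpow_mul (abs_nonneg v)]
  ring_nf

noncomputable def potentialIoc (x α v : ℝ) : ℝ≥0∞ :=
  ∫⁻ t in Ioc 0 x, ENNReal.ofReal (|t - v| ^ (-α))

lemma measurable_potentialIoc (x α : ℝ) : Measurable (potentialIoc x α) :=
  Measurable.lintegral_prod_right' (f := fun p : ℝ × ℝ => ENNReal.ofReal (|p.2 - p.1| ^ (-α)))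
    (by fun_prop)

lemma abs_rpow_neg_le_indicator_add {x α : ℝ} (hx : 0 < x) (hα : 0 ≤ α) (s : ℝ) :
    ENNReal.ofReal (|s| ^ (-α)) ≤
      (Icc (-x) x).indicator (fun s => ENNReal.ofReal (|s| ^ (-α))) s +
        ENNReal.ofReal (x ^ (-α)) := by
  by_cases hs : s ∈ Icc (-x) x
  · simp [indicator_of_mem hs]
  · have hxs : x < |s| := by
      simp only [mem_Icc, not_and_or, not_le] at hs
      rcases hs with hs | hs
      · rw [abs_of_neg (by linarith)]; linarith
      · rw [abs_of_pos (by linarith)]; exact hs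
    rw [indicator_of_notMem hs, zero_add]
    exact ENNReal.ofReal_le_ofReal (Real.rpow_le_rpow_of_nonpos hx hxs.le (by linarith))

lemma potentialIoc_le {x α : ℝ} (hx : 0 < x) (hα : 0 ≤ α) (v : ℝ) :
    potentialIoc x α v ≤ (∫⁻ s in Icc (-x) x, ENNReal.ofReal (|s| ^ (-α))) +
      ENNReal.ofReal (x ^ (-α)) * ENNReal.ofReal x := by
  set g : ℝ → ℝ≥0∞ := (Icc (-x) x).indicator fun s => ENNReal.ofReal (|s| ^ (-α))
  calc potentialIoc x α v
      ≤ ∫⁻ t in Ioc 0 x, (g (t - v) + ENNReal.ofReal (x ^ (-α))) :=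
        lintegral_mono fun t => abs_rpow_neg_le_indicator_add hx hα (t - v)
    _ = (∫⁻ t in Ioc 0 x, g (t - v)) + ENNReal.ofReal (x ^ (-α)) * ENNReal.ofReal x := by
        rw [lintegral_add_right _ measurable_const, setLIntegral_const, Real.volume_Ioc, sub_zero]
    _ ≤ (∫⁻ t, g (t - v)) + ENNReal.ofReal (x ^ (-α)) * ENNReal.ofReal x := by
        gcongr
        exact Measure.restrict_le_self
    _ = _ := by
        rw [lintegral_sub_right_eq_self, lintegral_indicator measurableSet_Icc]

lemma potentialIoc_le_of_two_mul_lt {x α v : ℝ} (hx : 0 < x) (hα : 0 ≤ α) (hv : 2 * x < |v|) :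
    potentialIoc x α v ≤ ENNReal.ofReal (x * 2 ^ α) * ENNReal.ofReal (|v| ^ (-α)) := by
  have hfar : ∀ t ∈ Ioc 0 x,
      ENNReal.ofReal (|t - v| ^ (-α)) ≤ ENNReal.ofReal ((|v| / 2) ^ (-α)) := by
    rintro t ⟨ht0, htx⟩
    have : |v| / 2 ≤ |t - v| := by
      have := abs_sub_abs_le_abs_sub v t
      rw [abs_of_pos ht0, abs_sub_comm] at this
      linarith
    exact ENNReal.ofReal_le_ofReal (Real.rpow_le_rpow_of_nonpos (by linarith) this (by linarith))
  calc potentialIoc x α v ≤ ∫⁻ _ in Ioc 0 x, ENNReal.ofReal ((|v| / 2) ^ (-α)) :=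
        setLIntegral_mono measurable_const hfar
    _ = ENNReal.ofReal (x * 2 ^ α) * ENNReal.ofReal (|v| ^ (-α)) := by
        rw [setLIntegral_const, Real.volume_Ioc, sub_zero, ← ENNReal.ofReal_mul (by positivity),
          ← ENNReal.ofReal_mul (by positivity), Real.div_rpow (abs_nonneg v) zero_le_two,
          Real.rpow_neg zero_le_two, div_inv_eq_mul]
        ring_nf

lemma setLIntegral_potentialIoc_sq_Icc_lt_top {x α : ℝ} (hx : 0 < x) (hα₀ : 0 ≤ α) (hα₁ : α < 1)
    (R : ℝ) : ∫⁻ v in Icc (-R) R, potentialIoc x α v ^ 2 < ⊤ := by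
  set B := (∫⁻ s in Icc (-x) x, ENNReal.ofReal (|s| ^ (-α))) +
    ENNReal.ofReal (x ^ (-α)) * ENNReal.ofReal x
  have hB : B < ⊤ := by
    have := (integrableOn_abs_rpow_neg_Icc hα₁ x).setLIntegral_lt_top
    finiteness
  calc ∫⁻ v in Icc (-R) R, potentialIoc x α v ^ 2 ≤ ∫⁻ _ in Icc (-R) R, B ^ 2 :=
        lintegral_mono fun v => by gcongr; exact potentialIoc_le hx hα₀ v
    _ < ⊤ := by
        rw [setLIntegral_const, Real.volume_Icc]
        exact ENNReal.mul_lt_top (ENNReal.pow_lt_top hB) ofReal_lt_top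

lemma setLIntegral_potentialIoc_sq_compl_Icc_lt_top {x α : ℝ} (hx : 0 < x) (hα : 1 < 2 * α) :
    ∫⁻ v in (Icc (-(2 * x)) (2 * x))ᶜ, potentialIoc x α v ^ 2 < ⊤ := by
  set C := ENNReal.ofReal (x * 2 ^ α)
  have hfar : ∀ v ∈ (Icc (-(2 * x)) (2 * x))ᶜ,
      potentialIoc x α v ^ 2 ≤ C ^ 2 * ENNReal.ofReal (|v| ^ (-(2 * α))) := by
    intro v hv
    have hv' : 2 * x < |v| := lt_of_not_ge fun h => hv (abs_le.1 h)
    calc potentialIoc x α v ^ 2 ≤ (C * ENNReal.ofReal (|v| ^ (-α))) ^ 2 := by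
          gcongr
          exact potentialIoc_le_of_two_mul_lt hx (by linarith) hv'
      _ = C ^ 2 * ENNReal.ofReal (|v| ^ (-(2 * α))) := by rw [mul_pow, ofReal_abs_rpow_neg_sq]
  calc ∫⁻ v in (Icc (-(2 * x)) (2 * x))ᶜ, potentialIoc x α v ^ 2
      ≤ ∫⁻ v in (Icc (-(2 * x)) (2 * x))ᶜ, C ^ 2 * ENNReal.ofReal (|v| ^ (-(2 * α))) :=
        setLIntegral_mono (by fun_prop) hfar
    _ < ⊤ := by
        rw [lintegral_const_mul _ (by fun_prop)]
        have := (integrableOn_abs_rpow_neg_compl_Icc (by linarith : 0 < 2 * x) hα)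
          |>.setLIntegral_lt_top
        finiteness

lemma setLIntegral_potentialIoc_sq_cond_lt_top {x α : ℝ} (hx : 0 < x) (hα : 0 ≤ α) (b : Bool)
    (h : cond b (α < 1) (1 < 2 * α)) :
    ∫⁻ v in cond b (Icc (-(2 * x)) (2 * x)) (Icc (-(2 * x)) (2 * x))ᶜ,
      potentialIoc x α v ^ 2 < ⊤ := by
  cases b
  · exact setLIntegral_potentialIoc_sq_compl_Icc_lt_top hx h
  · exact setLIntegral_potentialIoc_sq_Icc_lt_top hx hα h _

lemma rpow_neg_add_add_le {a b c ν θ₁ θ₂ θ₃ : ℝ} (ha : 0 < a) (hb : 0 < b) (hc : 0 < c)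
    (hν : 0 ≤ ν) (hθ₁ : 0 ≤ θ₁) (hθ₂ : 0 ≤ θ₂) (hθ₃ : 0 ≤ θ₃) (hθ : θ₁ + θ₂ + θ₃ = 1) :
    (a + b + c) ^ (-ν) ≤ a ^ (-(ν * θ₁)) * b ^ (-(ν * θ₂)) * c ^ (-(ν * θ₃)) := by
  have hgeom : a ^ θ₁ * b ^ θ₂ * c ^ θ₃ ≤ a + b + c := by
    refine (Real.geom_mean_le_arith_mean3_weighted hθ₁ hθ₂ hθ₃ ha.le hb.le hc.le hθ).trans ?_
    nlinarith
  calc (a + b + c) ^ (-ν) ≤ (a ^ θ₁ * b ^ θ₂ * c ^ θ₃) ^ (-ν) :=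
        Real.rpow_le_rpow_of_nonpos (by positivity) hgeom (by linarith)
    _ = a ^ (-(ν * θ₁)) * b ^ (-(ν * θ₂)) * c ^ (-(ν * θ₃)) := by
        rw [Real.mul_rpow (by positivity) (by positivity),
          Real.mul_rpow (by positivity) (by positivity),
          ← Real.rpow_mul ha.le, ← Real.rpow_mul hb.le, ← Real.rpow_mul hc.le]
        ring_nf

lemma mul_abs_rpow_div_rpow_neg_mul {c q ν : ℝ} (hc : 0 ≤ c) (hν : ν ≠ 0) (θ y : ℝ) :
    (c * |y| ^ (q / ν)) ^ (-(ν * θ)) = c ^ (-(ν * θ)) * |y| ^ (-(q * θ)) := by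
  rw [Real.mul_rpow hc (by positivity), ← Real.rpow_mul (abs_nonneg y)]
  congr 2
  field_simp

lemma setLIntegral_prod_prod_mul {α β γ : Type*} [MeasurableSpace α] [MeasurableSpace β]
    [MeasurableSpace γ] {μ : Measure α} {ν : Measure β} {ρ : Measure γ} [SFinite μ] [SFinite ν]
    [SFinite ρ] {f : α → ℝ≥0∞} {g : β → ℝ≥0∞} {h : γ → ℝ≥0∞} (hf : Measurable f)
    (hg : Measurable g) (hh : Measurable h) (s : Set α) (t : Set β) (r : Set γ) :
    ∫⁻ u in s ×ˢ t ×ˢ r, f u.1 * (g u.2.1 * h u.2.2) ∂μ.prod (ν.prod ρ) =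
      (∫⁻ x in s, f x ∂μ) * ((∫⁻ y in t, g y ∂ν) * ∫⁻ z in r, h z ∂ρ) := by
  rw [← Measure.prod_restrict, ← Measure.prod_restrict,
    lintegral_prod_mul (g := fun p : β × γ => g p.1 * h p.2) hf.aemeasurable (by fun_prop),
    lintegral_prod_mul hg.aemeasurable hh.aemeasurable]

noncomputable def f23 (q₁ q₂ q₃ c₁ c₂ c₃ ν x₂ x₃ : ℝ) (u : ℝ × ℝ × ℝ) : ℝ≥0∞ :=
  ∫⁻ t₂ in Ioc 0 x₂, ∫⁻ t₃ in Ioc 0 x₃,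
    ENNReal.ofReal ((c₁ * |u.1| ^ (q₁ / ν) + c₂ * |t₂ - u.2.1| ^ (q₂ / ν) +
      c₃ * |t₃ - u.2.2| ^ (q₃ / ν)) ^ (-ν))

section KernelBound

variable {q₁ q₂ q₃ c₁ c₂ c₃ ν θ₁ θ₂ θ₃ : ℝ}

lemma rpow_neg_sum_mul_abs_rpow_le (hc₁ : 0 < c₁) (hc₂ : 0 < c₂) (hc₃ : 0 < c₃) (hν : 0 < ν)
    (hθ₁ : 0 ≤ θ₁) (hθ₂ : 0 ≤ θ₂) (hθ₃ : 0 ≤ θ₃) (hθ : θ₁ + θ₂ + θ₃ = 1)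
    {y₁ y₂ y₃ : ℝ} (hy₁ : y₁ ≠ 0) (hy₂ : y₂ ≠ 0) (hy₃ : y₃ ≠ 0) :
    (c₁ * |y₁| ^ (q₁ / ν) + c₂ * |y₂| ^ (q₂ / ν) + c₃ * |y₃| ^ (q₃ / ν)) ^ (-ν) ≤
      c₁ ^ (-(ν * θ₁)) * c₂ ^ (-(ν * θ₂)) * c₃ ^ (-(ν * θ₃)) *
        |y₁| ^ (-(q₁ * θ₁)) * |y₂| ^ (-(q₂ * θ₂)) * |y₃| ^ (-(q₃ * θ₃)) := by
  refine (rpow_neg_add_add_le (by positivity) (by positivity) (by positivity) hν.le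
    hθ₁ hθ₂ hθ₃ hθ).trans_eq ?_
  rw [mul_abs_rpow_div_rpow_neg_mul hc₁.le hν.ne', mul_abs_rpow_div_rpow_neg_mul hc₂.le hν.ne',
    mul_abs_rpow_div_rpow_neg_mul hc₃.le hν.ne']
  ring

lemma f23_le (hc₁ : 0 < c₁) (hc₂ : 0 < c₂) (hc₃ : 0 < c₃) (hν : 0 < ν)
    (hθ₁ : 0 ≤ θ₁) (hθ₂ : 0 ≤ θ₂) (hθ₃ : 0 ≤ θ₃) (hθ : θ₁ + θ₂ + θ₃ = 1)
    (x₂ x₃ : ℝ) {u : ℝ × ℝ × ℝ} (hu : u.1 ≠ 0) :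
    f23 q₁ q₂ q₃ c₁ c₂ c₃ ν x₂ x₃ u ≤
      ENNReal.ofReal (c₁ ^ (-(ν * θ₁)) * c₂ ^ (-(ν * θ₂)) * c₃ ^ (-(ν * θ₃))) *
        ENNReal.ofReal (|u.1| ^ (-(q₁ * θ₁))) * potentialIoc x₂ (q₂ * θ₂) u.2.1 *
          potentialIoc x₃ (q₃ * θ₃) u.2.2 := by
  calc f23 q₁ q₂ q₃ c₁ c₂ c₃ ν x₂ x₃ u
      ≤ ∫⁻ t₂ in Ioc 0 x₂, ∫⁻ t₃ in Ioc 0 x₃,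
          ENNReal.ofReal (c₁ ^ (-(ν * θ₁)) * c₂ ^ (-(ν * θ₂)) * c₃ ^ (-(ν * θ₃))) *
            ENNReal.ofReal (|u.1| ^ (-(q₁ * θ₁))) *
              ENNReal.ofReal (|t₂ - u.2.1| ^ (-(q₂ * θ₂))) *
                ENNReal.ofReal (|t₃ - u.2.2| ^ (-(q₃ * θ₃))) := by
        refine lintegral_mono_ae ?_
        filter_upwards [ae_restrict_of_ae (volume.ae_ne u.2.1)] with t₂ ht₂
        refine lintegral_mono_ae ?_
        filter_upwards [ae_restrict_of_ae (volume.ae_ne u.2.2)] with t₃ ht₃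
        rw [← ENNReal.ofReal_mul (by positivity), ← ENNReal.ofReal_mul (by positivity),
          ← ENNReal.ofReal_mul (by positivity)]
        exact ENNReal.ofReal_le_ofReal (rpow_neg_sum_mul_abs_rpow_le hc₁ hc₂ hc₃ hν hθ₁ hθ₂ hθ₃ hθ
          hu (sub_ne_zero.2 ht₂) (sub_ne_zero.2 ht₃))
    _ = _ := by
        rw [lintegral_lintegral_mul (by fun_prop) (by fun_prop),
          lintegral_const_mul _ (by fun_prop)]
        rfl

lemma setLIntegral_f23_sq_prod_lt_top (hc₁ : 0 < c₁) (hc₂ : 0 < c₂) (hc₃ : 0 < c₃) (hν : 0 < ν)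
    (hθ₁ : 0 ≤ θ₁) (hθ₂ : 0 ≤ θ₂) (hθ₃ : 0 ≤ θ₃) (hθ : θ₁ + θ₂ + θ₃ = 1)
    (x₂ x₃ : ℝ) {S₁ S₂ S₃ : Set ℝ}
    (h₁ : ∫⁻ v in S₁, ENNReal.ofReal (|v| ^ (-(2 * (q₁ * θ₁)))) < ⊤)
    (h₂ : ∫⁻ v in S₂, potentialIoc x₂ (q₂ * θ₂) v ^ 2 < ⊤)
    (h₃ : ∫⁻ v in S₃, potentialIoc x₃ (q₃ * θ₃) v ^ 2 < ⊤) :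
    ∫⁻ u in S₁ ×ˢ S₂ ×ˢ S₃, f23 q₁ q₂ q₃ c₁ c₂ c₃ ν x₂ x₃ u ^ 2 < ⊤ := by
  set M := ENNReal.ofReal (c₁ ^ (-(ν * θ₁)) * c₂ ^ (-(ν * θ₂)) * c₃ ^ (-(ν * θ₃)))
  have hbound : ∀ᵐ u : ℝ × ℝ × ℝ, f23 q₁ q₂ q₃ c₁ c₂ c₃ ν x₂ x₃ u ^ 2 ≤
      M ^ 2 * (ENNReal.ofReal (|u.1| ^ (-(2 * (q₁ * θ₁)))) *
        (potentialIoc x₂ (q₂ * θ₂) u.2.1 ^ 2 * potentialIoc x₃ (q₃ * θ₃) u.2.2 ^ 2)) := by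
    filter_upwards [Measure.quasiMeasurePreserving_fst.ae (volume.ae_ne 0)] with u hu
    calc f23 q₁ q₂ q₃ c₁ c₂ c₃ ν x₂ x₃ u ^ 2
        ≤ (M * ENNReal.ofReal (|u.1| ^ (-(q₁ * θ₁))) * potentialIoc x₂ (q₂ * θ₂) u.2.1 *
            potentialIoc x₃ (q₃ * θ₃) u.2.2) ^ 2 := by
          gcongr
          exact f23_le hc₁ hc₂ hc₃ hν hθ₁ hθ₂ hθ₃ hθ x₂ x₃ hu
      _ = _ := by
          rw [← ofReal_abs_rpow_neg_sq]
          ring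
  calc ∫⁻ u in S₁ ×ˢ S₂ ×ˢ S₃, f23 q₁ q₂ q₃ c₁ c₂ c₃ ν x₂ x₃ u ^ 2
      ≤ ∫⁻ u in S₁ ×ˢ S₂ ×ˢ S₃, M ^ 2 * (ENNReal.ofReal (|u.1| ^ (-(2 * (q₁ * θ₁)))) *
          (potentialIoc x₂ (q₂ * θ₂) u.2.1 ^ 2 * potentialIoc x₃ (q₃ * θ₃) u.2.2 ^ 2)) :=
        lintegral_mono_ae (ae_restrict_of_ae hbound)
    _ = M ^ 2 * ((∫⁻ v in S₁, ENNReal.ofReal (|v| ^ (-(2 * (q₁ * θ₁))))) *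
          ((∫⁻ v in S₂, potentialIoc x₂ (q₂ * θ₂) v ^ 2) *
            ∫⁻ v in S₃, potentialIoc x₃ (q₃ * θ₃) v ^ 2)) := by
        rw [lintegral_const_mul' _ _ (by finiteness)]
        congr 1
        exact setLIntegral_prod_prod_mul (continuous_abs.measurable.pow_const _).ennreal_ofReal
          ((measurable_potentialIoc _ _).pow_const 2) ((measurable_potentialIoc _ _).pow_const 2)
          S₁ S₂ S₃
    _ < ⊤ := by finiteness

end KernelBound

lemma exists_mem_Ioo_sum_eq_one {ι : Type*} [Fintype ι] {l h : ι → ℝ} (hlh : ∀ i, l i < h i)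
    (hl : ∑ i, l i < 1) (hh : 1 < ∑ i, h i) :
    ∃ θ : ι → ℝ, (∀ i, θ i ∈ Ioo (l i) (h i)) ∧ ∑ i, θ i = 1 := by
  set s := (1 - ∑ i, l i) / (∑ i, h i - ∑ i, l i)
  have hs₀ : 0 < s := div_pos (by linarith) (by linarith)
  have hs₁ : s < 1 := (div_lt_one (by linarith)).2 (by linarith)
  have hs : s * (∑ i, h i - ∑ i, l i) = 1 - ∑ i, l i := div_mul_cancel₀ _ (by linarith)
  refine ⟨fun i => l i + s * (h i - l i), fun i => ⟨?_, ?_⟩, ?_⟩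
  · nlinarith [hlh i]
  · nlinarith [hlh i]
  · rw [Finset.sum_add_distrib, ← Finset.mul_sum, Finset.sum_sub_distrib]
    linear_combination hs

lemma exists_admissible_weights {q₁ q₂ q₃ : ℝ} (hq₁ : 0 < q₁) (hq₂ : 0 < q₂) (hq₃ : 0 < q₃)
    (hlow : 1 / (2 * q₁) + 1 / (2 * q₂) + 1 / (2 * q₃) < 1)
    (hup : 1 < 1 / (2 * q₁) + 1 / q₂ + 1 / q₃) (b₁ b₂ b₃ : Bool) :
    ∃ θ₁ θ₂ θ₃ : ℝ, 0 < θ₁ ∧ 0 < θ₂ ∧ 0 < θ₃ ∧ θ₁ + θ₂ + θ₃ = 1 ∧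
      cond b₁ (2 * (q₁ * θ₁) < 1) (1 < 2 * (q₁ * θ₁)) ∧
      cond b₂ (q₂ * θ₂ < 1) (1 < 2 * (q₂ * θ₂)) ∧
      cond b₃ (q₃ * θ₃ < 1) (1 < 2 * (q₃ * θ₃)) := by
  rw [show 1 / q₂ = 2 * (1 / (2 * q₂)) by field_simp,
    show 1 / q₃ = 2 * (1 / (2 * q₃)) by field_simp] at hup
  have hr : ∀ q : ℝ, 0 < q → 0 < 1 / (2 * q) ∧ 2 * q * (1 / (2 * q)) = 1 :=
    fun q hq => ⟨by positivity, by field_simp⟩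
  obtain ⟨hr₁, hqr₁⟩ := hr q₁ hq₁
  obtain ⟨hr₂, hqr₂⟩ := hr q₂ hq₂
  obtain ⟨hr₃, hqr₃⟩ := hr q₃ hq₃
  generalize 1 / (2 * q₁) = r₁ at *
  generalize 1 / (2 * q₂) = r₂ at *
  generalize 1 / (2 * q₃) = r₃ at *
  -- The lower ends sum to at most `r₁ + r₂ + r₃ < 1`; the upper ends sum to more than `1`, by
  -- `hup` when every coordinate is small and trivially otherwise.
  obtain ⟨θ, hθ, hsum⟩ := exists_mem_Ioo_sum_eq_one
    (l := ![cond b₁ 0 r₁, cond b₂ 0 r₂, cond b₃ 0 r₃])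
    (h := ![cond b₁ r₁ 1, cond b₂ (2 * r₂) 1, cond b₃ (2 * r₃) 1])
    (by intro i; fin_cases i <;> cases b₁ <;> cases b₂ <;> cases b₃ <;> simp <;> linarith)
    (by cases b₁ <;> cases b₂ <;> cases b₃ <;> simp [Fin.sum_univ_three] <;> linarith)
    (by cases b₁ <;> cases b₂ <;> cases b₃ <;> simp [Fin.sum_univ_three] <;> linarith)
  have h₁ := hθ 0
  have h₂ := hθ 1
  have h₃ := hθ 2
  refine ⟨θ 0, θ 1, θ 2, ?_, ?_, ?_, by simpa [Fin.sum_univ_three] using hsum, ?_, ?_, ?_⟩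
  · cases b₁ <;> simp at h₁ <;> linarith
  · cases b₂ <;> simp at h₂ <;> linarith
  · cases b₃ <;> simp at h₃ <;> linarith
  · cases b₁ <;> simp at h₁ ⊢ <;> nlinarith
  · cases b₂ <;> simp at h₂ ⊢ <;> nlinarith
  · cases b₃ <;> simp at h₃ ⊢ <;> nlinarith

lemma exists_mem_cond_compl {α : Type*} (x : α) (s : Set α) : ∃ b : Bool, x ∈ cond b s sᶜ := by
  by_cases hx : x ∈ s
  exacts [⟨true, hx⟩, ⟨false, hx⟩]

lemma lintegral_lt_top_of_forall_cond_prod {α β γ : Type*} [MeasurableSpace α]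
    [MeasurableSpace β] [MeasurableSpace γ] {μ : Measure (α × β × γ)} {f : α × β × γ → ℝ≥0∞}
    (s : Set α) (t : Set β) (r : Set γ)
    (h : ∀ b₁ b₂ b₃ : Bool, ∫⁻ u in cond b₁ s sᶜ ×ˢ cond b₂ t tᶜ ×ˢ cond b₃ r rᶜ, f u ∂μ < ⊤) :
    ∫⁻ u, f u ∂μ < ⊤ := by
  have hcover : (univ : Set (α × β × γ)) ⊆
      ⋃ b : Bool × Bool × Bool, cond b.1 s sᶜ ×ˢ cond b.2.1 t tᶜ ×ˢ cond b.2.2 r rᶜ := by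
    rintro ⟨x, y, z⟩ -
    obtain ⟨b₁, h₁⟩ := exists_mem_cond_compl x s
    obtain ⟨b₂, h₂⟩ := exists_mem_cond_compl y t
    obtain ⟨b₃, h₃⟩ := exists_mem_cond_compl z r
    exact mem_iUnion.2 ⟨(b₁, b₂, b₃), h₁, h₂, h₃⟩
  calc ∫⁻ u, f u ∂μ = ∫⁻ u in univ, f u ∂μ := (setLIntegral_univ _).symm
    _ ≤ ∑' b : Bool × Bool × Bool,
          ∫⁻ u in cond b.1 s sᶜ ×ˢ cond b.2.1 t tᶜ ×ˢ cond b.2.2 r rᶜ, f u ∂μ :=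
        (lintegral_mono_set hcover).trans (lintegral_iUnion_le _ _)
    _ < ⊤ := by
        rw [tsum_fintype]
        exact ENNReal.sum_lt_top.2 fun b _ => h _ _ _

theorem stmt_16 (q1 q2 q3 c1 c2 c3 ν x2 x3 : ℝ)
    (hq1 : 0 < q1) (hq2 : 0 < q2) (hq3 : 0 < q3)
    (hc1 : 0 < c1) (hc2 : 0 < c2) (hc3 : 0 < c3) (hν : 0 < ν)
    (hx2 : 0 < x2) (hx3 : 0 < x3)
    (hlow : 1 / (2 * q1) + 1 / (2 * q2) + 1 / (2 * q3) < 1)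
    (hup : 1 < 1 / (2 * q1) + 1 / q2 + 1 / q3) :
    (∫⁻ u : ℝ × ℝ × ℝ,
      (∫⁻ t2 in Set.Ioc (0 : ℝ) x2, ∫⁻ t3 in Set.Ioc (0 : ℝ) x3,
        ENNReal.ofReal ((c1 * |u.1| ^ (q1 / ν) + c2 * |t2 - u.2.1| ^ (q2 / ν) +
          c3 * |t3 - u.2.2| ^ (q3 / ν)) ^ (-ν))) ^ 2) < ⊤ := by
  change ∫⁻ u, f23 q1 q2 q3 c1 c2 c3 ν x2 x3 u ^ 2 < ⊤
  refine lintegral_lt_top_of_forall_cond_prod (Icc (-1) 1) (Icc (-(2 * x2)) (2 * x2))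
    (Icc (-(2 * x3)) (2 * x3)) fun b₁ b₂ b₃ => ?_
  obtain ⟨θ₁, θ₂, θ₃, hθ₁, hθ₂, hθ₃, hθ, h₁, h₂, h₃⟩ :=
    exists_admissible_weights hq1 hq2 hq3 hlow hup b₁ b₂ b₃
  exact setLIntegral_f23_sq_prod_lt_top hc1 hc2 hc3 hν hθ₁.le hθ₂.le hθ₃.le hθ x2 x3
    (setLIntegral_abs_rpow_neg_cond_lt_top one_pos b₁ h₁)
    (setLIntegral_potentialIoc_sq_cond_lt_top hx2 (by positivity) b₂ h₂)
    (setLIntegral_potentialIoc_sq_cond_lt_top hx3 (by positivity) b₃ h₃)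
end
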